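/- arXiv:math/0603718 — 3 statements merged into one kernel-verified Lean document; each statement's English description precedes it below -/
import Mathlib

section
/- For any finite simple graph G, the cycle space of G over the field with two elements is spanned by the edge-indicator vectors of the chordless (primitive) cycles of G. -/
open SimpleGraph Finset
open scoped Classical

noncomputable section

namespace RingGraphs

variable {V : Type*}

/-- The boundary map from 1-chains (ZMod 2 combinations of edges) to 0-chains. -/
def chainBoundary [Fintype V] (G : SimpleGraph V) :
    (G.edgeSet → ZMod 2) →ₗ[ZMod 2] (V → ZMod 2) where
  toFun f v := ∑ e : G.edgeSet, if v ∈ (e : Sym2 V) then f e else 0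
  map_add' f g := by
    funext v
    simp only [Pi.add_apply]
    rw [← Finset.sum_add_distrib]
    exact Finset.sum_congr rfl (fun e _ => by split <;> simp)
  map_smul' c f := by
    funext v
    simp only [Pi.smul_apply, RingHom.id_apply, smul_eq_mul, Finset.mul_sum]
    exact Finset.sum_congr rfl (fun e _ => by split <;> simp)

/-- The cycle space `Z(G)` of a graph: the kernel of the boundary map. -/
def cycleSpace [Fintype V] (G : SimpleGraph V) : Submodule (ZMod 2) (G.edgeSet → ZMod 2) :=
  LinearMap.ker (chainBoundary G)

/-- The cycle rank: the dimension of the cycle space over `ZMod 2`. -/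
def cycRank [Fintype V] (G : SimpleGraph V) : ℕ :=
  Module.finrank (ZMod 2) (cycleSpace G)

/-- The cycle vector (indicator vector of the edge set) of a closed walk. -/
def cycleVector [Fintype V] (G : SimpleGraph V) {v : V} (c : G.Walk v v) :
    G.edgeSet → ZMod 2 :=
  fun e => if (e : Sym2 V) ∈ c.edges then 1 else 0

/-- A primitive (chordless) cycle: a cycle such that every edge of `G` joining two
vertices of the cycle is an edge of the cycle. -/
def IsPrimitiveCycle (G : SimpleGraph V) {v : V} (c : G.Walk v v) : Prop :=
  c.IsCycle ∧ ∀ x y, x ∈ c.support → y ∈ c.support → G.Adj x y → s(x, y) ∈ c.edges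

/-- The collection of edge sets of primitive cycles of `G`. -/
def primCycleEdgeSets (G : SimpleGraph V) : Set (Set (Sym2 V)) :=
  {s | ∃ (v : V) (c : G.Walk v v), IsPrimitiveCycle G c ∧ {e | e ∈ c.edges} = s}

/-- The free rank: the number of primitive (chordless) cycles of `G`. -/
def frank (G : SimpleGraph V) : ℕ := (primCycleEdgeSets G).ncard

/-- The set of cycle vectors of primitive cycles of `G`. -/
def primCycleVectors [Fintype V] (G : SimpleGraph V) : Set (G.edgeSet → ZMod 2) :=
  {w | ∃ (v : V) (c : G.Walk v v), IsPrimitiveCycle G c ∧ cycleVector G c = w}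

/-! ### Auxiliary lemmas -/

lemma zmod2_eq_one {a : ZMod 2} (h : a ≠ 0) : a = 1 := by revert a; decide

lemma zmod2_eq_zero {a : ZMod 2} (h : a ≠ 1) : a = 0 := by revert a; decide

lemma chainBoundary_apply [Fintype V] (G : SimpleGraph V) (f : G.edgeSet → ZMod 2) (v : V) :
    chainBoundary G f v = ∑ e : G.edgeSet, if v ∈ (e : Sym2 V) then f e else 0 := rfl

/-- Boundary of a single-edge indicator. -/
lemma boundary_single [Fintype V] (G : SimpleGraph V) {x y : V} (h : G.Adj x y) :
    chainBoundary G (fun e => if (e : Sym2 V) = s(x, y) then 1 else 0) =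
      fun v => (if v = x then 1 else 0) + (if v = y then 1 else 0) := by
  funext v
  have hmem : s(x, y) ∈ G.edgeSet := h
  rw [chainBoundary_apply]
  rw [Finset.sum_eq_single (⟨s(x, y), hmem⟩ : G.edgeSet)]
  · by_cases hv : v ∈ s(x, y)
    · rcases Sym2.mem_iff.mp hv with rfl | rfl
      · simp [hv, h.ne]
      · simp [hv, h.ne']
    · rw [Sym2.mem_iff] at hv
      push_neg at hv
      simp [Sym2.mem_iff, hv.1, hv.2]
  · intro e _ hne
    have he : (e : Sym2 V) ≠ s(x, y) := fun hh => hne (Subtype.ext hh)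
    simp [he]
  · intro habs
    exact absurd (Finset.mem_univ _) habs

/-- Boundary of the edge-indicator of a trail. -/
lemma boundary_trail [Fintype V] (G : SimpleGraph V) {a b : V} (p : G.Walk a b)
    (hp : p.IsTrail) :
    chainBoundary G (fun e => if (e : Sym2 V) ∈ p.edges then 1 else 0) =
      fun v => (if v = a then 1 else 0) + (if v = b then 1 else 0) := by
  have key : ∀ a : ZMod 2, a + a = 0 := by decide
  induction p with
  | nil =>
    funext v
    rw [chainBoundary_apply]
    simp [key]
  | @cons a w b h q ih =>
    rw [Walk.isTrail_cons] at hp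
    have hsplit : (fun e : G.edgeSet => if (e : Sym2 V) ∈ (Walk.cons h q).edges
          then (1 : ZMod 2) else 0)
        = (fun e : G.edgeSet => if (e : Sym2 V) = s(a, w) then 1 else 0)
          + (fun e : G.edgeSet => if (e : Sym2 V) ∈ q.edges then 1 else 0) := by
      funext e
      simp only [Walk.edges_cons, List.mem_cons, Pi.add_apply]
      by_cases h1 : (e : Sym2 V) = s(a, w)
      · have h2 : (e : Sym2 V) ∉ q.edges := h1 ▸ hp.2
        simp [h1, h2, hp.2]
      · simp [h1]
    rw [hsplit, map_add, boundary_single G h, ih hp.1]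
    funext v
    have key2 : ∀ x y z : ZMod 2, (x + y) + (y + z) = x + z := by decide
    simp only [Pi.add_apply]
    exact key2 _ _ _

/-- The cycle vector of a closed trail lies in the cycle space. -/
lemma cycleVector_mem_cycleSpace [Fintype V] (G : SimpleGraph V) {v : V} {c : G.Walk v v}
    (hc : c.IsTrail) : cycleVector G c ∈ cycleSpace G := by
  have hb := boundary_trail G c hc
  rw [cycleSpace, LinearMap.mem_ker]
  rw [show cycleVector G c = (fun e : G.edgeSet => if (e : Sym2 V) ∈ c.edges then 1 else 0)
    from rfl, hb]
  have key : ∀ a : ZMod 2, a + a = 0 := by decide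
  funext u
  simp [key]

lemma edges_of_length_one {G : SimpleGraph V} {a b : V} {p : G.Walk a b}
    (h : p.length = 1) : p.edges = [s(a, b)] := by
  cases p with
  | nil => simp at h
  | cons h' q =>
    rename_i w
    simp only [Walk.length_cons] at h
    have h0 : q.length = 0 := by omega
    have hw : w = b := Walk.eq_of_length_eq_zero h0
    subst hw
    have : q.edges = [] := by
      have hl := q.length_edges
      rw [h0] at hl
      exact List.eq_nil_of_length_eq_zero hl
    simp [this]

lemma mem_support_tail_of_closed {G : SimpleGraph V} {v u : V} {c : G.Walk v v}
    (hnil : ¬ c.Nil) (hu : u ∈ c.support) : u ∈ c.support.tail := by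
  cases c with
  | nil => exact absurd Walk.nil_nil hnil
  | cons h p =>
    simp only [Walk.support_cons, List.tail_cons]
    rcases (by simpa using hu : u = v ∨ u ∈ p.support) with rfl | hu'
    · exact p.end_mem_support
    · exact hu'

/-- The cycle vector of any cycle lies in the span of primitive cycle vectors. -/
lemma cycleVector_mem_span [Fintype V] (G : SimpleGraph V) :
    ∀ (n : ℕ) {v : V} (c : G.Walk v v), c.IsCycle → c.length ≤ n →
      cycleVector G c ∈ Submodule.span (ZMod 2) (primCycleVectors G) := by
  intro n
  induction n using Nat.strong_induction_on with
  | _ n ih =>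
  intro v c hc hlen
  by_cases hprim : IsPrimitiveCycle G c
  · exact Submodule.subset_span ⟨v, c, hprim, rfl⟩
  · have h2 : ¬ ∀ x y, x ∈ c.support → y ∈ c.support → G.Adj x y → s(x, y) ∈ c.edges :=
      fun hall => hprim ⟨hc, hall⟩
    push_neg at h2
    obtain ⟨x, y, hx, hy, hadj, hchord⟩ := h2
    have hnil : ¬ c.Nil := by
      have := hc.three_le_length
      rw [Walk.nil_iff_length_eq]
      omega
    -- rotate the cycle to start at x
    set c' := c.rotate x hx with hc'def
    have hc' : c'.IsCycle := hc.rotate hx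
    have hedges : ∀ e, e ∈ c'.edges ↔ e ∈ c.edges := fun e => (c.rotate_edges x hx).mem_iff
    have hlen' : c'.length = c.length := by
      rw [← Walk.length_darts, ← Walk.length_darts]
      exact (c.rotate_darts x hx).perm.length_eq
    have hxy : x ≠ y := hadj.ne
    have hy' : y ∈ c'.support := by
      have h1 : y ∈ c.support.tail := mem_support_tail_of_closed hnil hy
      have h2 : y ∈ c'.support.tail := (c.support_rotate x hx).mem_iff.mpr h1
      exact List.mem_of_mem_tail h2
    set q1 := c'.takeUntil y hy' with hq1def
    set q2 := c'.dropUntil y hy' with hq2def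
    have hspec : q1.append q2 = c' := c'.take_spec hy'
    have hE : c'.edges = q1.edges ++ q2.edges := by
      conv_lhs => rw [← hspec]
      exact q1.edges_append q2
    have hEnodup : (q1.edges ++ q2.edges).Nodup := hE ▸ hc'.1.1.edges_nodup
    have hEdisj : ∀ e, e ∈ q1.edges → e ∉ q2.edges := by
      have := List.disjoint_of_nodup_append hEnodup
      exact fun e h1 h2 => this h1 h2
    have hstail : (q1.support.tail ++ q2.support.tail).Nodup := by
      have h1 : c'.support.tail = q1.support.tail ++ q2.support.tail := by
        conv_lhs => rw [← hspec]
        exact q1.tail_support_append q2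
      exact h1 ▸ hc'.2
    have hq1path : q1.IsPath := by
      apply Walk.IsPath.mk' 
      rw [q1.support_eq_cons]
      refine List.Nodup.cons ?_ ((List.sublist_append_left _ _).nodup hstail)
      intro hmem
      have hx2 : x ∈ q2.support.tail := Walk.end_mem_tail_support_of_ne hxy.symm q2
      exact (List.disjoint_of_nodup_append hstail) hmem hx2
    have hq2path : q2.IsPath := by
      apply Walk.IsPath.mk'
      rw [q2.support_eq_cons]
      refine List.Nodup.cons ?_ ((List.sublist_append_right _ _).nodup hstail)
      intro hmem
      have hy2 : y ∈ q1.support.tail := Walk.end_mem_tail_support_of_ne hxy q1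
      exact (List.disjoint_of_nodup_append hstail) hy2 hmem
    have hchord' : s(x, y) ∉ c'.edges := fun hh => hchord ((hedges _).mp hh)
    -- the two pieces as cycles
    set c1 : G.Walk x x := Walk.cons hadj q2 with hc1def
    set c2 : G.Walk y y := Walk.cons hadj.symm q1 with hc2def
    have hc1 : c1.IsCycle := by
      rw [hc1def, Walk.cons_isCycle_iff]
      exact ⟨hq2path, fun hh => hchord' (hE ▸ List.mem_append_right _ hh)⟩
    have hc2 : c2.IsCycle := by
      rw [hc2def, Walk.cons_isCycle_iff]
      refine ⟨hq1path, fun hh => ?_⟩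
      rw [Sym2.eq_swap] at hh
      exact hchord' (hE ▸ List.mem_append_left _ hh)
    -- length estimates
    have hq1len : 2 ≤ q1.length := by
      rcases Nat.lt_or_ge q1.length 2 with hl | hl
      · have : q1.length = 0 ∨ q1.length = 1 := by omega
        rcases this with hq | hq
        · exact absurd (Walk.eq_of_length_eq_zero hq) hxy
        · have h1 := edges_of_length_one hq
          have h2 : s(x, y) ∈ q1.edges := by rw [h1]; exact List.mem_singleton_self _
          exact absurd (hE ▸ List.mem_append_left _ h2) hchord'
      · exact hl
    have hq2len : 2 ≤ q2.length := by
      rcases Nat.lt_or_ge q2.length 2 with hl | hl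
      · have : q2.length = 0 ∨ q2.length = 1 := by omega
        rcases this with hq | hq
        · exact absurd (Walk.eq_of_length_eq_zero hq).symm hxy
        · have h1 := edges_of_length_one hq
          have h2 : s(x, y) ∈ q2.edges := by
            rw [h1, Sym2.eq_swap]; exact List.mem_singleton_self _
          exact absurd (hE ▸ List.mem_append_right _ h2) hchord'
      · exact hl
    have hlensum : q1.length + q2.length = c.length := by
      rw [← hlen', ← hspec, Walk.length_append]
    have hn3 : 3 ≤ c.length := hc.three_le_length
    -- the vector identity
    have hvec : cycleVector G c = cycleVector G c1 + cycleVector G c2 := by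
      funext e
      simp only [cycleVector, Pi.add_apply, hc1def, hc2def, Walk.edges_cons, List.mem_cons]
      have he' : ((e : Sym2 V) ∈ c.edges) ↔
          ((e : Sym2 V) ∈ q1.edges ∨ (e : Sym2 V) ∈ q2.edges) := by
        rw [← hedges, hE, List.mem_append]
      have key : (1 : ZMod 2) + 1 = 0 := by decide
      by_cases h1 : (e : Sym2 V) = s(x, y)
      · have hnc : (e : Sym2 V) ∉ c.edges := h1 ▸ hchord
        have h1' : (e : Sym2 V) = s(y, x) := by rw [h1, Sym2.eq_swap]
        simp [hnc, h1, h1', key, hchord]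
      · have h1' : (e : Sym2 V) ≠ s(y, x) := by rw [Sym2.eq_swap]; exact h1
        by_cases h2 : (e : Sym2 V) ∈ q1.edges
        · have h3 : (e : Sym2 V) ∉ q2.edges := hEdisj _ h2
          simp [he', h1, h1', h2, h3]
        · by_cases h3 : (e : Sym2 V) ∈ q2.edges
          · simp [he', h1, h1', h2, h3]
          · simp [he', h1, h1', h2, h3]
    rw [hvec]
    have hm : n - 1 < n := by omega
    refine Submodule.add_mem _ (ih (n - 1) hm c1 hc1 ?_) (ih (n - 1) hm c2 hc2 ?_)
    · have : c1.length = q2.length + 1 := by simp [hc1def]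
      omega
    · have : c2.length = q1.length + 1 := by simp [hc2def]
      omega

/-- Every nonzero element of the cycle space supports a cycle. -/
lemma exists_cycle_of_mem_cycleSpace [Fintype V] (G : SimpleGraph V)
    {f : G.edgeSet → ZMod 2} (hf : f ∈ cycleSpace G) (hne : f ≠ 0) :
    ∃ (v : V) (c : G.Walk v v), c.IsCycle ∧
      ∀ e : G.edgeSet, (e : Sym2 V) ∈ c.edges → f e = 1 := by
  classical
  set P : ℕ → Prop := fun n => ∃ (a b : V) (p : G.Walk a b), p.IsPath ∧
    (∀ e : G.edgeSet, (e : Sym2 V) ∈ p.edges → f e = 1) ∧ p.length = n with hPdef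
  -- a starting edge
  obtain ⟨e0, hfe0⟩ : ∃ e0, f e0 ≠ 0 := by
    by_contra hcon; push_neg at hcon
    exact hne (funext fun e => hcon e)
  have hfe0' : f e0 = 1 := zmod2_eq_one hfe0
  obtain ⟨x, y, hxy⟩ : ∃ x y, (e0 : Sym2 V) = s(x, y) :=
    (e0 : Sym2 V).ind (fun x y => ⟨x, y, rfl⟩)
  have hadj : G.Adj x y := G.mem_edgeSet.mp (hxy ▸ e0.2)
  have hP1 : P 1 := by
    refine ⟨x, y, Walk.cons hadj Walk.nil, ?_, ?_, by simp⟩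
    · rw [Walk.cons_isPath_iff]
      exact ⟨Walk.IsPath.nil, by simp [hadj.ne]⟩
    · intro e he
      simp only [Walk.edges_cons, Walk.edges_nil, List.mem_singleton] at he
      have : e = e0 := Subtype.ext (he.trans hxy.symm)
      rw [this]; exact hfe0'
  have hcard : 1 ≤ Fintype.card V := by
    have : Nonempty V := ⟨x⟩
    exact Fintype.card_pos
  set n := Nat.findGreatest P (Fintype.card V) with hndef
  have hPn : P n := Nat.findGreatest_spec hcard hP1
  have hmax : ∀ k, n < k → k ≤ Fintype.card V → ¬ P k :=
    fun k h1 h2 => Nat.findGreatest_is_greatest h1 h2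
  have hn1 : 1 ≤ n := by
    by_contra hcon
    exact hmax 1 (by omega) hcard hP1
  obtain ⟨a, b, p, hpath, hsupp, hplen⟩ := hPn
  -- reverse so that the interesting endpoint is the start
  set q := p.reverse with hqdef
  have hqpath : q.IsPath := hpath.reverse
  have hqsupp : ∀ e : G.edgeSet, (e : Sym2 V) ∈ q.edges → f e = 1 := by
    intro e he
    rw [hqdef, Walk.edges_reverse, List.mem_reverse] at he
    exact hsupp e he
  have hqnil : ¬ q.Nil := by
    rw [Walk.nil_iff_length_eq, hqdef, Walk.length_reverse]
    omega
  obtain ⟨w, hbw, q', hq⟩ := Walk.not_nil_iff.mp hqnil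
  have hbq' : b ∉ q'.support := by
    have := hqpath
    rw [hq, Walk.cons_isPath_iff] at this
    exact this.2
  have hfirst : f ⟨s(b, w), hbw⟩ = 1 := hqsupp _ (by rw [hq]; simp)
  -- find a second support edge at b
  have hA : ∃ e' : G.edgeSet, (b ∈ (e' : Sym2 V) ∧ f e' = 1) ∧
      e' ≠ (⟨s(b, w), hbw⟩ : G.edgeSet) := by
    by_contra hcon
    push_neg at hcon
    have hbd : chainBoundary G f b = 1 := by
      rw [chainBoundary_apply]
      rw [Finset.sum_eq_single (⟨s(b, w), hbw⟩ : G.edgeSet)]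
      · simp [hfirst]
      · intro e _ hne'
        by_cases hb : b ∈ (e : Sym2 V)
        · have hfe : f e = 0 := by
            by_contra hfe'
            exact hne' (hcon e ⟨hb, zmod2_eq_one hfe'⟩)
          simp [hb, hfe]
        · simp [hb]
      · intro habs; exact absurd (Finset.mem_univ _) habs
    have hker : chainBoundary G f = 0 := hf
    rw [hker] at hbd
    simp at hbd
  obtain ⟨e', ⟨hbe', hfe'⟩, hne'⟩ := hA
  obtain ⟨z, hz⟩ : ∃ z, (e' : Sym2 V) = s(b, z) := Sym2.mem_iff_exists.mp hbe'
  have hbz : G.Adj b z := G.mem_edgeSet.mp (hz ▸ e'.2)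
  have hzw : z ≠ w := by
    rintro rfl
    exact hne' (Subtype.ext hz)
  have hznotedge : s(b, z) ∉ q.edges := by
    intro hmem
    rw [hq, Walk.edges_cons, List.mem_cons] at hmem
    rcases hmem with hmem | hmem
    · exact hzw (Sym2.congr_right.mp hmem)
    · exact hbq' (q'.fst_mem_support_of_mem_edges hmem)
  by_cases hzs : z ∈ q.support
  · -- found a cycle
    set r := q.takeUntil z hzs with hrdef
    have hrpath : r.IsPath := hqpath.takeUntil hzs
    have hredge : ∀ e, e ∈ r.edges → e ∈ q.edges := fun e he =>
      q.edges_takeUntil_subset hzs he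
    refine ⟨z, Walk.cons hbz.symm r, ?_, ?_⟩
    · rw [Walk.cons_isCycle_iff]
      refine ⟨hrpath, fun hh => ?_⟩
      rw [Sym2.eq_swap] at hh
      exact hznotedge (hredge _ hh)
    · intro e he
      rw [Walk.edges_cons, List.mem_cons] at he
      rcases he with he | he
      · have : e = e' := by
          apply Subtype.ext
          rw [he, hz, Sym2.eq_swap]
        rw [this]; exact hfe'
      · exact hqsupp e (hredge _ he)
  · -- extend the path: contradiction with maximality
    exfalso
    have hext : (Walk.cons hbz.symm q).IsPath := by
      rw [Walk.cons_isPath_iff]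
      exact ⟨hqpath, hzs⟩
    have hPn1 : P (n + 1) := by
      refine ⟨z, a, Walk.cons hbz.symm q, hext, ?_, ?_⟩
      · intro e he
        rw [Walk.edges_cons, List.mem_cons] at he
        rcases he with he | he
        · have : e = e' := by
            apply Subtype.ext
            rw [he, hz, Sym2.eq_swap]
          rw [this]; exact hfe'
        · exact hqsupp e he
      · rw [Walk.length_cons, hqdef, Walk.length_reverse, hplen]
    have hlt : n + 1 ≤ Fintype.card V := by
      have := hext.length_lt
      rw [Walk.length_cons, hqdef, Walk.length_reverse, hplen] at this
      omega
    exact hmax (n + 1) (by omega) hlt hPn1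

/-- Main induction: every element of the cycle space is in the span. -/
lemma mem_span_of_mem_cycleSpace [Fintype V] (G : SimpleGraph V) :
    ∀ (n : ℕ) (f : G.edgeSet → ZMod 2), f ∈ cycleSpace G →
      (Finset.univ.filter (fun e => f e ≠ 0)).card ≤ n →
      f ∈ Submodule.span (ZMod 2) (primCycleVectors G) := by
  intro n
  induction n using Nat.strong_induction_on with
  | _ n ih =>
  intro f hf hcard
  by_cases h0 : f = 0
  · rw [h0]; exact Submodule.zero_mem _
  · obtain ⟨v, c, hcyc, hsuppc⟩ := exists_cycle_of_mem_cycleSpace G hf h0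
    set w := cycleVector G c with hwdef
    have hw_span : w ∈ Submodule.span (ZMod 2) (primCycleVectors G) :=
      cycleVector_mem_span G c.length c hcyc le_rfl
    have hw_cs : w ∈ cycleSpace G := cycleVector_mem_cycleSpace G hcyc.1.1
    have hww : ∀ e, w e + w e = 0 := by
      intro e
      have : ∀ a : ZMod 2, a + a = 0 := by decide
      exact this _
    have hsum : f = (f + w) + w := by
      funext e
      simp only [Pi.add_apply]
      rw [add_assoc, hww e, add_zero]
    -- support shrinks
    have hBA : (Finset.univ.filter (fun e => (f + w) e ≠ 0)) ⊂
        (Finset.univ.filter (fun e => f e ≠ 0)) := by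
      constructor
      · intro e he
        simp only [Finset.mem_filter, Finset.mem_univ, true_and] at he ⊢
        intro hfe
        apply he
        simp only [Pi.add_apply, hfe, zero_add]
        by_contra hwe
        have hwe1 : w e = 1 := zmod2_eq_one hwe
        have hmem : (e : Sym2 V) ∈ c.edges := by
          by_contra hmm
          rw [hwdef] at hwe1
          simp [cycleVector, hmm] at hwe1
        exact absurd (hsuppc e hmem) (by rw [hfe]; decide)
      · intro hsub
        obtain ⟨e1v, he1v⟩ : ∃ e, e ∈ c.edges := by
          have h3 := hcyc.three_le_length
          have : c.edges ≠ [] := by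
            intro hh
            have := c.length_edges
            rw [hh] at this
            simp at this
            omega
          exact List.exists_mem_of_ne_nil _ this
        set e1 : G.edgeSet := ⟨e1v, c.edges_subset_edgeSet he1v⟩ with he1def
        have hfa : f e1 = 1 := hsuppc e1 he1v
        have hwa : w e1 = 1 := by rw [hwdef]; exact if_pos he1v
        have hin : e1 ∈ Finset.univ.filter (fun e => f e ≠ 0) := by
          simp only [Finset.mem_filter, Finset.mem_univ, true_and, hfa]
          decide
        have hnotin : e1 ∉ Finset.univ.filter (fun e => (f + w) e ≠ 0) := by
          simp only [Finset.mem_filter, Finset.mem_univ, true_and, Pi.add_apply, hfa, hwa,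
            not_not]
          decide
        exact hnotin (hsub hin)
    have hcard' : (Finset.univ.filter (fun e => (f + w) e ≠ 0)).card < n := by
      have := Finset.card_lt_card hBA
      omega
    have hmem := ih (n - 1) (by omega) (f + w) (Submodule.add_mem _ hf hw_cs) (by omega)
    rw [hsum]
    exact Submodule.add_mem _ hmem hw_span

/-- The cycle space of a finite simple graph is spanned by the
cycle vectors of its primitive (chordless) cycles. -/
theorem cycleSpace_eq_span_primCycleVectors [Fintype V] (G : SimpleGraph V) :
    cycleSpace G = Submodule.span (ZMod 2) (primCycleVectors G) := by
  apply le_antisymm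
  · intro f hf
    exact mem_span_of_mem_cycleSpace G _ f hf le_rfl
  · rw [Submodule.span_le]
    rintro w ⟨v, c, ⟨hcyc, _⟩, rfl⟩
    exact cycleVector_mem_cycleSpace G hcyc.1.1

end RingGraphs
end
end

section
/- Let D be a connected oriented graph and let P_D be the kernel of the k-algebra map k[t_1,...,t_q] → k[x_1^{±1},...,x_n^{±1}] sending t_i to x^{v_i} where v_i is the signed incidence vector of the i-th oriented edge. Then P_D is generated by the binomials t_c corresponding to chordless (primitive) cycles c of D. -/
open SimpleGraph Finset
open scoped Classical
set_option linter.unusedSectionVars false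
set_option linter.unusedVariables false
set_option maxHeartbeats 1000000

noncomputable section

namespace RingGraphs

variable {V E : Type*}

/-- The signed incidence vector of an oriented edge: `-1` at the tail, `+1` at the head. -/
def incVec (tail head : E → V) (e : E) : V → ℤ :=
  fun v => (if v = head e then 1 else 0) - (if v = tail e then 1 else 0)

/-- The underlying simple graph of the oriented graph with edges `E`, given by tail and
head maps. -/
def ograph (tail head : E → V) : SimpleGraph V :=
  SimpleGraph.fromRel (fun u v => ∃ e, tail e = u ∧ head e = v)

/-- The maps `tail, head` describe an orientation of a (simple) graph: there are no
loops and distinct edges join distinct pairs of vertices. -/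
def IsOrientation (tail head : E → V) : Prop :=
  (∀ e, tail e ≠ head e) ∧ Function.Injective (fun e => s(tail e, head e))

/-- The incidence matrix of an oriented graph (over `ℚ`). -/
def incMatrix (tail head : E → V) : Matrix V E ℚ :=
  fun v e => ((incVec tail head e v : ℤ) : ℚ)

/-- The binomial `t_c` associated to a closed walk `c`: the product of the variables of
the edges traversed in their own direction minus the product of the variables of the
edges traversed against their direction (an empty product is `1`). -/
def cycBinom (k : Type*) [CommRing k] [Fintype E] (tail head : E → V)
    {G : SimpleGraph V} {v : V} (c : G.Walk v v) : MvPolynomial E k :=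
  (∏ e ∈ Finset.univ.filter
      (fun e => (tail e, head e) ∈ c.darts.map SimpleGraph.Dart.toProd),
      MvPolynomial.X e) -
  ∏ e ∈ Finset.univ.filter
      (fun e => (head e, tail e) ∈ c.darts.map SimpleGraph.Dart.toProd),
      MvPolynomial.X e

/-- The toric ideal of an oriented graph: the kernel of the `k`-algebra map
`k[t_e : e ∈ E] → k[x_1^{±1},…,x_n^{±1}]` sending `t_e` to `x^{v_e}`, where `v_e` is the
signed incidence vector of `e` (the Laurent polynomial ring is realized as the group
algebra of `V → ℤ`). -/
def toricIdeal (k : Type*) [CommRing k] (tail head : E → V) : Ideal (MvPolynomial E k) :=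
  RingHom.ker (MvPolynomial.aeval (R := k)
    (fun e => AddMonoidAlgebra.of' k (V → ℤ) (incVec tail head e))).toRingHom


open MvPolynomial AddMonoidAlgebra

section Aux
variable [Fintype E] (k : Type*) [CommRing k] (tail head : E → V)

/-- the weight (image exponent vector) of an exponent vector -/
def wt (a : E → ℕ) : V → ℤ := fun v => ∑ e, (a e : ℤ) * incVec tail head e v

/-- the toric map as a ring hom -/
def phi : MvPolynomial E k →+* AddMonoidAlgebra k (V → ℤ) :=
  (MvPolynomial.aeval (R := k)
    (fun e => AddMonoidAlgebra.of' k (V → ℤ) (incVec tail head e))).toRingHom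

/-- monomial with exponent function `a` -/
def Mn (a : E → ℕ) : MvPolynomial E k := ∏ e, X e ^ a e

lemma phi_prod_pow (s : Finset E) (n : E → ℕ) :
    phi k tail head (∏ e ∈ s, X e ^ n e) =
      AddMonoidAlgebra.single (fun v => ∑ e ∈ s, (n e : ℤ) * incVec tail head e v) (1 : k) := by
  classical
  induction s using Finset.induction with
  | empty =>
      simp only [Finset.prod_empty, Finset.sum_empty, map_one]
      rfl
  | insert a s hx ih =>
      rw [Finset.prod_insert hx, map_mul, ih, map_pow]
      have hX : phi k tail head (X a) = AddMonoidAlgebra.single (incVec tail head a) (1 : k) := by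
        simp [phi, of'_apply]
      rw [hX, AddMonoidAlgebra.single_pow, AddMonoidAlgebra.single_mul_single, one_pow, one_mul]
      congr 1
      funext v
      simp [Finset.sum_insert hx, Pi.add_apply, zsmul_eq_mul]

lemma phi_Mn (a : E → ℕ) :
    phi k tail head (Mn k a) = AddMonoidAlgebra.single (wt tail head a) (1 : k) := by
  rw [Mn, phi_prod_pow]; rfl

lemma phi_monomial (d : E →₀ ℕ) (c : k) :
    phi k tail head (monomial d c) = AddMonoidAlgebra.single (wt tail head ⇑d) c := by
  have h1 : (monomial d c : MvPolynomial E k) = C c * Mn k ⇑d := by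
    rw [monomial_eq, Mn]
    congr 1
    exact Finsupp.prod_fintype _ _ (fun e => pow_zero _)
  rw [h1, map_mul, phi_Mn]
  have h2 : phi k tail head (C c) = AddMonoidAlgebra.single (0 : V → ℤ) c := by
    simp [phi]
  rw [h2, AddMonoidAlgebra.single_mul_single, zero_add, mul_one]

lemma ker_fiber_sum (f : MvPolynomial E k) (hf : phi k tail head f = 0) (g : V → ℤ) :
    ∑ d ∈ f.support.filter (fun d : E →₀ ℕ => wt tail head ⇑d = g), f.coeff d = 0 := by
  classical
  have h1 : phi k tail head f
      = ∑ d ∈ f.support, AddMonoidAlgebra.single (wt tail head ⇑d) (f.coeff d) := by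
    conv_lhs => rw [← f.support_sum_monomial_coeff]
    rw [map_sum]
    exact Finset.sum_congr rfl fun d _ => phi_monomial k tail head d _
  have h2 := congrArg (fun h : AddMonoidAlgebra k (V → ℤ) => h.coeff g) (h1.symm.trans hf)
  simp only [AddMonoidAlgebra.coeff_sum, AddMonoidAlgebra.coeff_zero, Finsupp.coe_zero, Pi.zero_apply] at h2
  rw [Finsupp.finset_sum_apply] at h2
  rw [Finset.sum_filter]
  have h6 : ∑ d ∈ f.support, (if wt tail head ⇑d = g then f.coeff d else 0)
      = ∑ i ∈ f.support, (AddMonoidAlgebra.single (wt tail head ⇑i) (f.coeff i)).coeff g :=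
    Finset.sum_congr rfl fun d _ => by simp [Finsupp.single_apply]
  exact h6.trans h2

lemma mem_span_of_ker (J : Ideal (MvPolynomial E k))
    (hJ : ∀ a b : E → ℕ, wt tail head a = wt tail head b → Mn k a - Mn k b ∈ J)
    (f : MvPolynomial E k) (hf : phi k tail head f = 0) : f ∈ J := by
  classical
  suffices H : ∀ n (f : MvPolynomial E k), phi k tail head f = 0 → f.support.card ≤ n → f ∈ J by
    exact H f.support.card f hf le_rfl
  clear hf f
  intro n
  induction n using Nat.strong_induction_on with
  | _ n ih =>
  intro f hf hcard
  rcases eq_or_ne f 0 with rfl | hne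
  · exact J.zero_mem
  obtain ⟨d0, hd0⟩ := MvPolynomial.support_nonempty.mpr hne
  set g := wt tail head ⇑d0 with hg
  set fib := f.support.filter (fun d : E →₀ ℕ => wt tail head ⇑d = g) with hfib
  set f' := f - ∑ d ∈ fib, f.coeff d • (Mn k ⇑d - Mn k ⇑d0) with hf'
  have hsumzero : ∑ d ∈ fib, f.coeff d = 0 := ker_fiber_sum k tail head f hf g
  have hMn : ∀ d : E →₀ ℕ, Mn k ⇑d = monomial d (1 : k) := by
    intro d
    rw [monomial_eq, Mn, map_one, one_mul]
    exact (Finsupp.prod_fintype _ _ (fun e => pow_zero _)).symm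
  have h3 : ∑ d ∈ fib, f.coeff d • (Mn k ⇑d - Mn k ⇑d0)
      = ∑ d ∈ fib, monomial d (f.coeff d) := by
    rw [Finset.sum_congr rfl (fun d (_ : d ∈ fib) => by
      rw [smul_sub, hMn, hMn, smul_monomial, smul_monomial, smul_eq_mul, mul_one])]
    rw [Finset.sum_sub_distrib]
    have h4 : ∑ d ∈ fib, (monomial d0 (f.coeff d) : MvPolynomial E k) = 0 := by
      rw [← map_sum (monomial d0), hsumzero, map_zero]
    rw [h4, sub_zero]
  have hsplit2 : f = ∑ d ∈ f.support \ fib, monomial d (f.coeff d)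
      + ∑ d ∈ fib, monomial d (f.coeff d) := by
    have hsplit : f.support = (f.support \ fib) ∪ fib := by
      rw [Finset.sdiff_union_self_eq_union, Finset.union_eq_left.mpr (Finset.filter_subset _ _)]
    conv_lhs => rw [← f.support_sum_monomial_coeff, hsplit]
    rw [Finset.sum_union (Finset.sdiff_disjoint)]
  have hfs : f' = ∑ d ∈ f.support \ fib, monomial d (f.coeff d) := by
    rw [hf', h3]
    nth_rewrite 1 [hsplit2]
    ring
  have hbin : ∑ d ∈ fib, f.coeff d • (Mn k ⇑d - Mn k ⇑d0) ∈ J := by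
    refine Ideal.sum_mem _ fun d hd => ?_
    rw [MvPolynomial.smul_eq_C_mul]
    exact Ideal.mul_mem_left _ _ (hJ _ _ (Finset.mem_filter.mp hd).2)
  have hf'ker : phi k tail head f' = 0 := by
    rw [hf', h3, map_sub, hf, zero_sub, neg_eq_zero, map_sum]
    have h5 : ∀ d ∈ fib, phi k tail head (monomial d (f.coeff d))
        = AddMonoidAlgebra.single g (f.coeff d) := by
      intro d hd
      rw [phi_monomial, (Finset.mem_filter.mp hd).2]
    rw [Finset.sum_congr rfl h5, ← AddMonoidAlgebra.coeff_inj, AddMonoidAlgebra.coeff_sum]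
    simp only [AddMonoidAlgebra.coeff_single, AddMonoidAlgebra.coeff_zero]
    rw [← Finsupp.single_finset_sum, hsumzero, Finsupp.single_zero]
  have hsupsub : f'.support ⊆ f.support \ fib := by
    intro d hd
    rw [MvPolynomial.mem_support_iff] at hd
    by_contra h
    apply hd
    rw [hfs, MvPolynomial.coeff_sum]
    refine Finset.sum_eq_zero fun d' hd' => ?_
    rw [MvPolynomial.coeff_monomial, if_neg]
    rintro rfl
    exact h hd'
  have hd0fib : d0 ∈ fib := Finset.mem_filter.mpr ⟨hd0, rfl⟩
  have hcard' : f'.support.card < n := by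
    calc f'.support.card ≤ (f.support \ fib).card := Finset.card_le_card hsupsub
    _ < f.support.card := by
        refine Finset.card_lt_card ?_
        refine Finset.ssubset_iff_of_subset Finset.sdiff_subset |>.mpr ?_
        exact ⟨d0, hd0, by simp [hd0fib]⟩
    _ ≤ n := hcard
  have hf'J : f' ∈ J := ih _ hcard' f' hf'ker le_rfl
  have hfeq : f = f' + ∑ d ∈ fib, f.coeff d • (Mn k ⇑d - Mn k ⇑d0) := by
    rw [hf']; ring
  rw [hfeq]
  exact J.add_mem hf'J hbin
end Aux

section Graph
variable [Fintype E] (tail head : E → V)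

/-- forward edges of a walk -/
def Fp {u v : V} {G : SimpleGraph V} (w : G.Walk u v) : Finset E :=
  Finset.univ.filter (fun e => (tail e, head e) ∈ w.darts.map SimpleGraph.Dart.toProd)

/-- backward edges of a walk -/
def Fm {u v : V} {G : SimpleGraph V} (w : G.Walk u v) : Finset E :=
  Finset.univ.filter (fun e => (head e, tail e) ∈ w.darts.map SimpleGraph.Dart.toProd)

lemma adj_of_edge (ho : IsOrientation tail head) (e : E) :
    (ograph tail head).Adj (tail e) (head e) := by
  rw [ograph, SimpleGraph.fromRel_adj]
  exact ⟨ho.1 e, Or.inl ⟨e, rfl, rfl⟩⟩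

lemma exists_edge {u v : V} (h : (ograph tail head).Adj u v) :
    ∃ e, (tail e = u ∧ head e = v) ∨ (tail e = v ∧ head e = u) := by
  rw [ograph, SimpleGraph.fromRel_adj] at h
  rcases h.2 with ⟨e, h1, h2⟩ | ⟨e, h1, h2⟩
  · exact ⟨e, Or.inl ⟨h1, h2⟩⟩
  · exact ⟨e, Or.inr ⟨h1, h2⟩⟩

lemma edge_unique (ho : IsOrientation tail head) {e e' : E}
    (h : s(tail e, head e) = s(tail e', head e')) : e = e' := ho.2 h

/-- The dart of an edge. -/
def dartOf (ho : IsOrientation tail head) (e : E) : (ograph tail head).Dart :=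
  ⟨(tail e, head e), adj_of_edge tail head ho e⟩

def revDartOf (ho : IsOrientation tail head) (e : E) : (ograph tail head).Dart :=
  ⟨(head e, tail e), (adj_of_edge tail head ho e).symm⟩

/-- The contribution of a dart. -/
def dstep {G : SimpleGraph V} (d : G.Dart) : V → ℤ :=
  fun x => (if x = d.snd then 1 else 0) - (if x = d.fst then 1 else 0)

lemma dartsum {G : SimpleGraph V} {u v : V} (w : G.Walk u v) :
    (w.darts.map dstep).sum
      = (fun x => (if x = v then 1 else 0) - (if x = u then (1 : ℤ) else 0)) := by
  induction w with
  | nil => funext x; simp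
  | cons h p ih =>
      rw [SimpleGraph.Walk.darts_cons, List.map_cons, List.sum_cons, ih]
      funext x
      simp only [dstep, Pi.add_apply]
      ring

lemma mem_Fp_iff {u v : V} {G : SimpleGraph V} (w : G.Walk u v) (e : E) :
    e ∈ Fp tail head w ↔ (tail e, head e) ∈ w.darts.map SimpleGraph.Dart.toProd := by
  simp [Fp]

lemma mem_Fm_iff {u v : V} {G : SimpleGraph V} (w : G.Walk u v) (e : E) :
    e ∈ Fm tail head w ↔ (head e, tail e) ∈ w.darts.map SimpleGraph.Dart.toProd := by
  simp [Fm]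

lemma edge_mem_of_mem_Fp {u v : V} {G : SimpleGraph V} (w : G.Walk u v) {e : E}
    (h : e ∈ Fp tail head w) : s(tail e, head e) ∈ w.edges := by
  rw [mem_Fp_iff] at h
  obtain ⟨d, hd, hde⟩ := List.mem_map.mp h
  rw [SimpleGraph.Walk.edges, List.mem_map]
  exact ⟨d, hd, by rw [SimpleGraph.Dart.edge, hde]⟩

lemma edge_mem_of_mem_Fm {u v : V} {G : SimpleGraph V} (w : G.Walk u v) {e : E}
    (h : e ∈ Fm tail head w) : s(tail e, head e) ∈ w.edges := by
  rw [mem_Fm_iff] at h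
  obtain ⟨d, hd, hde⟩ := List.mem_map.mp h
  rw [SimpleGraph.Walk.edges, List.mem_map]
  refine ⟨d, hd, ?_⟩
  rw [SimpleGraph.Dart.edge, hde]
  exact Sym2.eq_swap

/-- In a trail, an edge is not both forward and backward. -/
lemma Fp_disjoint_Fm (ho : IsOrientation tail head) {u v : V}
    (w : (ograph tail head).Walk u v) (hw : w.edges.Nodup) :
    Disjoint (Fp tail head w) (Fm tail head w) := by
  rw [Finset.disjoint_left]
  intro e hp hm
  rw [mem_Fp_iff] at hp
  rw [mem_Fm_iff] at hm
  obtain ⟨d1, hd1, hd1e⟩ := List.mem_map.mp hp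
  obtain ⟨d2, hd2, hd2e⟩ := List.mem_map.mp hm
  have hne : d1 ≠ d2 := by
    intro h
    rw [h, hd2e] at hd1e
    exact ho.1 e (congrArg Prod.fst hd1e).symm
  have heq : d1 = d2 := by
    refine List.inj_on_of_nodup_map (f := SimpleGraph.Dart.edge) (l := w.darts) hw hd1 hd2 ?_
    have e1 : d1.edge = s(tail e, head e) := by rw [SimpleGraph.Dart.edge, hd1e]
    have e2 : d2.edge = s(head e, tail e) := by rw [SimpleGraph.Dart.edge, hd2e]
    rw [e1, e2]
    exact Sym2.eq_swap
  exact hne heq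

/-- Key telescoping identity: in a trail closed walk the forward and backward incidence
vectors sum equally. -/
lemma cycle_balance (ho : IsOrientation tail head) {v : V}
    (c : (ograph tail head).Walk v v) (hc : c.edges.Nodup) :
    ∑ e ∈ Fp tail head c, incVec tail head e = ∑ e ∈ Fm tail head c, incVec tail head e := by
  classical
  have hnodup : c.darts.Nodup := by
    have := hc
    rw [SimpleGraph.Walk.edges] at this
    exact List.Nodup.of_map _ this
  have htel : (c.darts.map dstep).sum = 0 := by
    rw [dartsum]; funext x; simp
  have hfin : (c.darts.map dstep).sum = ∑ d ∈ c.darts.toFinset, dstep d := by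
    rw [List.sum_toFinset _ hnodup]
  -- partition darts into forward and backward images
  have hinj1 : ∀ x ∈ Fp tail head c, ∀ y ∈ Fp tail head c,
      dartOf tail head ho x = dartOf tail head ho y → x = y := by
    intro e _ e' _ h
    have h0 : (tail e, head e) = (tail e', head e') := congrArg SimpleGraph.Dart.toProd h
    have h1 : tail e = tail e' := congrArg Prod.fst h0
    have h2 : head e = head e' := congrArg Prod.snd h0
    exact ho.2 (show s(tail e, head e) = s(tail e', head e') by rw [h1, h2])
  have hinj2 : ∀ x ∈ Fm tail head c, ∀ y ∈ Fm tail head c,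
      revDartOf tail head ho x = revDartOf tail head ho y → x = y := by
    intro e _ e' _ h
    have h0 : (head e, tail e) = (head e', tail e') := congrArg SimpleGraph.Dart.toProd h
    have h1 : tail e = tail e' := congrArg Prod.snd h0
    have h2 : head e = head e' := congrArg Prod.fst h0
    exact ho.2 (show s(tail e, head e) = s(tail e', head e') by rw [h1, h2])
  have himg : c.darts.toFinset
      = (Fp tail head c).image (dartOf tail head ho)
        ∪ (Fm tail head c).image (revDartOf tail head ho) := by
    ext d
    constructor
    · intro hd
      rw [List.mem_toFinset] at hd
      obtain ⟨e, he⟩ := exists_edge tail head d.adj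
      rcases he with ⟨h1, h2⟩ | ⟨h1, h2⟩
      · refine Finset.mem_union_left _ (Finset.mem_image.mpr ⟨e, ?_, ?_⟩)
        · rw [mem_Fp_iff]
          exact List.mem_map.mpr ⟨d, hd, by rw [h1, h2]⟩
        · exact SimpleGraph.Dart.ext _ _ (show (tail e, head e) = d.toProd by rw [h1, h2])
      · refine Finset.mem_union_right _ (Finset.mem_image.mpr ⟨e, ?_, ?_⟩)
        · rw [mem_Fm_iff]
          exact List.mem_map.mpr ⟨d, hd, by rw [h1, h2]⟩
        · exact SimpleGraph.Dart.ext _ _ (show (head e, tail e) = d.toProd by rw [h1, h2])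
    · intro hd
      rw [Finset.mem_union] at hd
      rw [List.mem_toFinset]
      rcases hd with hd | hd
      · obtain ⟨e, he, rfl⟩ := Finset.mem_image.mp hd
        rw [mem_Fp_iff] at he
        obtain ⟨d', hd', hde⟩ := List.mem_map.mp he
        have : dartOf tail head ho e = d' :=
          SimpleGraph.Dart.ext _ _ (show (tail e, head e) = d'.toProd from hde.symm)
        rw [this]; exact hd'
      · obtain ⟨e, he, rfl⟩ := Finset.mem_image.mp hd
        rw [mem_Fm_iff] at he
        obtain ⟨d', hd', hde⟩ := List.mem_map.mp he
        have : revDartOf tail head ho e = d' :=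
          SimpleGraph.Dart.ext _ _ (show (head e, tail e) = d'.toProd from hde.symm)
        rw [this]; exact hd'
  have hdisj : Disjoint ((Fp tail head c).image (dartOf tail head ho))
      ((Fm tail head c).image (revDartOf tail head ho)) := by
    rw [Finset.disjoint_left]
    rintro d hd1 hd2
    obtain ⟨e, _, rfl⟩ := Finset.mem_image.mp hd1
    obtain ⟨e', _, hee⟩ := Finset.mem_image.mp hd2
    have h0 : (head e', tail e') = (tail e, head e) := congrArg SimpleGraph.Dart.toProd hee
    have h1 : head e' = tail e := congrArg Prod.fst h0
    have h2 : tail e' = head e := congrArg Prod.snd h0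
    have hee' : e = e' := ho.2 (show s(tail e, head e) = s(tail e', head e') by
      rw [← h1, ← h2]; exact Sym2.eq_swap)
    rw [hee'] at h1
    exact ho.1 e' h1.symm
  have hstep1 : ∀ e, dstep (dartOf tail head ho e) = incVec tail head e := by
    intro e; funext x; simp [dstep, dartOf, incVec]; rfl
  have hstep2 : ∀ e, dstep (revDartOf tail head ho e) = -incVec tail head e := by
    intro e; funext x; simp [dstep, revDartOf, incVec]; rfl
  have hz := htel
  rw [hfin, himg, Finset.sum_union hdisj, Finset.sum_image hinj1, Finset.sum_image hinj2] at hz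
  rw [Finset.sum_congr rfl (fun e _ => hstep1 e), Finset.sum_congr rfl (fun e _ => hstep2 e)]
    at hz
  rw [Finset.sum_neg_distrib] at hz
  exact add_neg_eq_zero.mp hz

/-- Walk along a vertex sequence. -/
def chain {G : SimpleGraph V} (u : ℕ → V) (h : ∀ m, G.Adj (u m) (u (m+1))) :
    (n a : ℕ) → G.Walk (u a) (u (a+n))
  | 0, _ => SimpleGraph.Walk.nil
  | (n+1), a => SimpleGraph.Walk.cons (h a)
      ((chain u h n (a+1)).copy rfl (congrArg u (by omega)))

lemma chain_darts {G : SimpleGraph V} (u : ℕ → V) (h : ∀ m, G.Adj (u m) (u (m+1)))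
    (n a : ℕ) : (chain u h n a).darts.map SimpleGraph.Dart.toProd
      = (List.range n).map (fun t => (u (a+t), u (a+t+1))) := by
  induction n generalizing a with
  | zero => simp [chain]
  | succ n ih =>
      rw [chain, SimpleGraph.Walk.darts_cons, List.map_cons, SimpleGraph.Walk.darts_copy,
        ih (a+1)]
      conv_rhs => rw [List.range_succ_eq_map, List.map_cons, List.map_map]
      refine congrArg₂ List.cons rfl ?_
      refine List.map_congr_left fun t _ => ?_
      show (u (a+1+t), u (a+1+t+1)) = (u (a+(t+1)), u (a+(t+1)+1))
      have : a+1+t = a+(t+1) := by omega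
      rw [this]

lemma chain_support {G : SimpleGraph V} (u : ℕ → V) (h : ∀ m, G.Adj (u m) (u (m+1)))
    (n a : ℕ) : (chain u h n a).support = (List.range (n+1)).map (fun t => u (a+t)) := by
  induction n generalizing a with
  | zero => rw [chain]; rfl
  | succ n ih =>
      rw [chain, SimpleGraph.Walk.support_cons, SimpleGraph.Walk.support_copy, ih (a+1)]
      conv_rhs => rw [List.range_succ_eq_map, List.map_cons, List.map_map]
      refine congrArg₂ List.cons rfl ?_
      refine List.map_congr_left fun t _ => ?_
      show u (a+1+t) = u (a+(t+1))
      have : a+1+t = a+(t+1) := by omega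
      rw [this]

lemma chain_length {G : SimpleGraph V} (u : ℕ → V) (h : ∀ m, G.Adj (u m) (u (m+1)))
    (n a : ℕ) : (chain u h n a).length = n := by
  have := congrArg List.length (chain_darts u h n a)
  simpa using this


section Flow
variable [Fintype V] [Fintype E] (tail head : E → V)

/-- Existence of a cycle conformal to a nonzero flow. -/
lemma exists_conformal_cycle (ho : IsOrientation tail head) (d : E → ℤ)
    (hd : d ≠ 0) (hcons : ∀ x, ∑ e, d e * incVec tail head e x = 0) :
    ∃ (v : V) (c : (ograph tail head).Walk v v), c.IsCycle ∧
      (∀ e ∈ Fp tail head c, 0 < d e) ∧ (∀ e ∈ Fm tail head c, d e < 0) := by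
  classical
  set Out : V → Prop := fun v => ∃ e, (tail e = v ∧ 0 < d e) ∨ (head e = v ∧ d e < 0) with hOutdef
  set Inn : V → Prop := fun v => ∃ e, (head e = v ∧ 0 < d e) ∨ (tail e = v ∧ d e < 0) with hInndef
  have incp : ∀ (e : E) (x : V), incVec tail head e x
      = (if x = head e then (1:ℤ) else 0) - (if x = tail e then 1 else 0) := fun e x => rfl
  have in_to_out : ∀ v, Inn v → Out v := by
    intro v hv
    by_contra hno
    simp only [hOutdef] at hno
    push_neg at hno
    have hterm : ∀ e, 0 ≤ d e * incVec tail head e v := by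
      intro e
      obtain ⟨h1, h2⟩ := hno e
      rw [incp]
      by_cases ht : v = tail e
      · have hh : ¬ v = head e := fun hh => ho.1 e (ht.symm.trans hh)
        rw [if_pos ht, if_neg hh]
        have := h1 ht.symm
        nlinarith
      · by_cases hh : v = head e
        · rw [if_pos hh, if_neg ht]
          have := h2 hh.symm
          nlinarith
        · rw [if_neg ht, if_neg hh]; simp
    have hall : ∀ e ∈ Finset.univ, d e * incVec tail head e v = 0 :=
      (Finset.sum_eq_zero_iff_of_nonneg (fun e _ => hterm e)).mp (hcons v)
    obtain ⟨e1, he1⟩ := hv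
    have hz := hall e1 (Finset.mem_univ e1)
    rw [incp] at hz
    rcases he1 with ⟨h1, h2⟩ | ⟨h1, h2⟩
    · have hvh : v = head e1 := h1.symm
      have hvt : ¬ v = tail e1 := fun h => ho.1 e1 (h.symm.trans hvh)
      rw [if_pos hvh, if_neg hvt] at hz
      omega
    · have hvt : v = tail e1 := h1.symm
      have hvh : ¬ v = head e1 := fun h => ho.1 e1 (hvt.symm.trans h)
      rw [if_neg hvh, if_pos hvt] at hz
      omega
  -- a starting vertex
  obtain ⟨e0, he0⟩ : ∃ e, d e ≠ 0 := by
    by_contra h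
    push_neg at h
    exact hd (funext h)
  -- choice of successor
  have hstep : ∀ v, ∃ (e : E) (w : V), Out v →
      (((tail e = v ∧ head e = w ∧ 0 < d e) ∨ (head e = v ∧ tail e = w ∧ d e < 0)) ∧ Out w) := by
    intro v
    by_cases hv : Out v
    · obtain ⟨e, he⟩ := hv
      rcases he with ⟨h1, h2⟩ | ⟨h1, h2⟩
      · exact ⟨e, head e, fun _ => ⟨Or.inl ⟨h1, rfl, h2⟩, in_to_out _ ⟨e, Or.inl ⟨rfl, h2⟩⟩⟩⟩
      · exact ⟨e, tail e, fun _ => ⟨Or.inr ⟨h1, rfl, h2⟩, in_to_out _ ⟨e, Or.inr ⟨rfl, h2⟩⟩⟩⟩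
    · exact ⟨e0, v, fun h => absurd h hv⟩
  choose eps f hf using hstep
  -- starting vertex with Out
  have hv0 : ∃ v0, Out v0 := by
    rcases lt_or_ge 0 (d e0) with h | h
    · exact ⟨tail e0, e0, Or.inl ⟨rfl, h⟩⟩
    · exact ⟨head e0, e0, Or.inr ⟨rfl, lt_of_le_of_ne h he0⟩⟩
  obtain ⟨v0, hv0⟩ := hv0
  set u : ℕ → V := fun n => f^[n] v0 with hu
  have husucc : ∀ n, u (n+1) = f (u n) := fun n => Function.iterate_succ_apply' f n v0
  have hOutu : ∀ n, Out (u n) := by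
    intro n
    induction n with
    | zero => exact hv0
    | succ n ih => rw [husucc]; exact (hf _ ih).2
  have hstepu : ∀ n, (tail (eps (u n)) = u n ∧ head (eps (u n)) = u (n+1) ∧ 0 < d (eps (u n)))
      ∨ (head (eps (u n)) = u n ∧ tail (eps (u n)) = u (n+1) ∧ d (eps (u n)) < 0) := by
    intro n
    rw [husucc]
    exact (hf _ (hOutu n)).1
  -- injectivity of the chosen edge map
  have hepsinj : ∀ m n, eps (u m) = eps (u n) → u m = u n := by
    intro m n h
    rcases hstepu m with ⟨h1, _, h3⟩ | ⟨h1, _, h3⟩ <;>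
      rcases hstepu n with ⟨h1', _, h3'⟩ | ⟨h1', _, h3'⟩
    · rw [← h1, ← h1', h]
    · rw [h] at h3; omega
    · rw [h] at h3; omega
    · rw [← h1, ← h1', h]
  have hadj : ∀ m, (ograph tail head).Adj (u m) (u (m+1)) := by
    intro m
    rcases hstepu m with ⟨h1, h2, _⟩ | ⟨h1, h2, _⟩
    · rw [← h1, ← h2]; exact adj_of_edge tail head ho _
    · rw [← h1, ← h2]; exact (adj_of_edge tail head ho _).symm
  have hne : ∀ m, u m ≠ u (m+1) := by
    intro m
    exact (hadj m).ne
  -- pigeonhole: a repeated vertex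
  have hrep : ∃ j, ∃ i < j, u i = u j := by
    obtain ⟨i, j, hij, h⟩ := Finite.exists_ne_map_eq_of_infinite u
    rcases Nat.lt_or_ge i j with hlt | hge
    · exact ⟨j, i, hlt, h⟩
    · exact ⟨i, j, lt_of_le_of_ne hge (Ne.symm hij), h.symm⟩
  set j0 := Nat.find hrep with hj0
  obtain ⟨i, hij, huij⟩ := Nat.find_spec hrep
  have huniq : ∀ p q, p < j0 → q < j0 → u p = u q → p = q := by
    intro p q hp hq h
    by_contra hpq
    rcases Nat.lt_or_ge p q with hlt | hge
    · exact Nat.find_min hrep hq ⟨p, hlt, h⟩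
    · exact Nat.find_min hrep hp ⟨q, lt_of_le_of_ne hge (Ne.symm hpq), h.symm⟩
  set L := j0 - i with hL
  have hLpos : 0 < L := by omega
  have hiL : i + L = j0 := by omega
  have hL1 : L ≠ 1 := by
    intro h
    apply hne i
    rw [show i + 1 = j0 by omega, ← huij]
  have hL2 : L ≠ 2 := by
    intro h
    have hj2 : i + 2 = j0 := by omega
    have ha := hstepu i
    have hb := hstepu (i+1)
    have hu2 : u (i+1+1) = u i := by rw [show i+1+1 = j0 by omega, ← huij]
    rw [hu2] at hb
    have hEq : eps (u i) = eps (u (i+1)) := by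
      apply ho.2
      show s(tail (eps (u i)), head (eps (u i))) = s(tail (eps (u (i+1))), head (eps (u (i+1))))
      have e1 : s(tail (eps (u i)), head (eps (u i))) = s(u i, u (i+1)) := by
        rcases ha with ⟨h1, h2, _⟩ | ⟨h1, h2, _⟩
        · rw [h1, h2]
        · rw [h1, h2]; exact Sym2.eq_swap
      have e2 : s(tail (eps (u (i+1))), head (eps (u (i+1)))) = s(u (i+1), u i) := by
        rcases hb with ⟨h1, h2, _⟩ | ⟨h1, h2, _⟩
        · rw [h1, h2]
        · rw [h1, h2]; exact Sym2.eq_swap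
      rw [e1, e2]
      exact Sym2.eq_swap
    have := hepsinj i (i+1) hEq
    exact hne i this
  have hL3 : 3 ≤ L := by omega
  -- build the walk
  set w := ((chain u hadj L i).copy rfl ((congrArg u hiL).trans huij.symm)) with hw
  have hdarts : w.darts.map SimpleGraph.Dart.toProd
      = (List.range L).map (fun t => (u (i+t), u (i+t+1))) := by
    rw [hw, SimpleGraph.Walk.darts_copy, chain_darts]
  have hsup : w.support = (List.range (L+1)).map (fun t => u (i+t)) := by
    rw [hw, SimpleGraph.Walk.support_copy, chain_support]
  have hsuptail : w.support.tail = (List.range L).map (fun t => u (i+t+1)) := by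
    rw [hsup, List.range_succ_eq_map, List.map_cons, List.tail_cons, List.map_map]
    refine List.map_congr_left fun t _ => ?_
    show u (i+(t+1)) = u (i+t+1)
    rfl
  have hlen : w.length = L := by
    rw [hw, SimpleGraph.Walk.length_copy, chain_length]
  have hedges : w.edges
      = (List.range L).map (fun t => s(tail (eps (u (i+t))), head (eps (u (i+t))))) := by
    have h1 : w.edges = (w.darts.map SimpleGraph.Dart.toProd).map (fun p => s(p.1, p.2)) := by
      rw [SimpleGraph.Walk.edges, List.map_map]; rfl
    rw [h1, hdarts, List.map_map]
    refine List.map_congr_left fun t _ => ?_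
    show s(u (i+t), u (i+t+1)) = s(tail (eps (u (i+t))), head (eps (u (i+t))))
    rcases hstepu (i+t) with ⟨h1', h2', _⟩ | ⟨h1', h2', _⟩
    · rw [h1', h2']
    · rw [h1', h2']; exact Sym2.eq_swap
  have hconf : ∀ (e : E) (t : ℕ), t < L → (u (i+t), u (i+t+1)) = (tail e, head e)
      → e = eps (u (i+t)) ∧ tail (eps (u (i+t))) = u (i+t) := by
    intro e t ht hpair
    have h1 : tail e = u (i+t) := (congrArg Prod.fst hpair).symm
    have h2 : head e = u (i+t+1) := (congrArg Prod.snd hpair).symm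
    have heq : e = eps (u (i+t)) := by
      apply ho.2
      have hgoal : s(tail e, head e) = s(tail (eps (u (i+t))), head (eps (u (i+t)))) := by
        rcases hstepu (i+t) with ⟨h1', h2', _⟩ | ⟨h1', h2', _⟩
        · rw [h1, h2, h1', h2']
        · rw [h1, h2, h1', h2']; exact Sym2.eq_swap
      exact hgoal
    refine ⟨heq, ?_⟩
    rcases hstepu (i+t) with ⟨h1', _, _⟩ | ⟨h1', h2', _⟩
    · exact h1'
    · exfalso
      rw [← heq] at h2'
      rw [h1] at h2'
      exact hne (i+t) h2'
  have hconfm : ∀ (e : E) (t : ℕ), t < L → (u (i+t), u (i+t+1)) = (head e, tail e)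
      → e = eps (u (i+t)) ∧ head (eps (u (i+t))) = u (i+t) := by
    intro e t ht hpair
    have h1 : head e = u (i+t) := (congrArg Prod.fst hpair).symm
    have h2 : tail e = u (i+t+1) := (congrArg Prod.snd hpair).symm
    have heq : e = eps (u (i+t)) := by
      apply ho.2
      have hgoal : s(tail e, head e) = s(tail (eps (u (i+t))), head (eps (u (i+t)))) := by
        rcases hstepu (i+t) with ⟨h1', h2', _⟩ | ⟨h1', h2', _⟩
        · rw [h1, h2, h1', h2']; exact Sym2.eq_swap
        · rw [h1, h2, h1', h2']
      exact hgoal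
    refine ⟨heq, ?_⟩
    rcases hstepu (i+t) with ⟨h1', h2', _⟩ | ⟨h1', _, _⟩
    · exfalso
      rw [← heq] at h1'
      rw [h2] at h1'
      exact hne (i+t) h1'.symm
    · exact h1'
  refine ⟨u i, w, ?_, ?_, ?_⟩
  · refine ⟨⟨⟨?_⟩, ?_⟩, ?_⟩
    · rw [hedges]
      refine List.Nodup.map_on ?_ (List.nodup_range (n := L))
      intro t ht t' ht' hst
      rw [List.mem_range] at ht ht'
      have h1 : eps (u (i+t)) = eps (u (i+t')) := ho.2 hst
      have h2 := hepsinj _ _ h1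
      have h3 := huniq (i+t) (i+t') (by omega) (by omega) h2
      omega
    · intro h
      rw [h] at hlen
      simp at hlen
      omega
    · rw [hsuptail]
      refine List.Nodup.map_on ?_ (List.nodup_range (n := L))
      intro t ht t' ht' hst
      rw [List.mem_range] at ht ht'
      by_cases hp : t + 1 = L
      · by_cases hq : t' + 1 = L
        · omega
        · exfalso
          have h1 : u (i+t+1) = u i := by rw [show i+t+1 = j0 by omega, ← huij]
          have h2 : u (i+t'+1) = u i := by rw [← hst, h1]
          have := huniq (i+t'+1) i (by omega) (by omega) h2
          omega
      · by_cases hq : t' + 1 = L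
        · exfalso
          have h1 : u (i+t'+1) = u i := by rw [show i+t'+1 = j0 by omega, ← huij]
          have h2 : u (i+t+1) = u i := by rw [hst, h1]
          have := huniq (i+t+1) i (by omega) (by omega) h2
          omega
        · have := huniq (i+t+1) (i+t'+1) (by omega) (by omega) hst
          omega
  · intro e he
    rw [mem_Fp_iff, hdarts] at he
    obtain ⟨t, ht, hpair⟩ := List.mem_map.mp he
    rw [List.mem_range] at ht
    obtain ⟨heq, _⟩ := hconf e t ht hpair
    rcases hstepu (i+t) with ⟨_, _, h3⟩ | ⟨h1', h2', h3⟩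
    · rw [heq]; exact h3
    · exfalso
      have h1 : tail e = u (i+t) := (congrArg Prod.fst hpair).symm
      rw [← heq] at h2'
      rw [h1] at h2'
      exact hne (i+t) h2'
  · intro e he
    rw [mem_Fm_iff, hdarts] at he
    obtain ⟨t, ht, hpair⟩ := List.mem_map.mp he
    rw [List.mem_range] at ht
    obtain ⟨heq, _⟩ := hconfm e t ht hpair
    rcases hstepu (i+t) with ⟨h1', h2', h3⟩ | ⟨_, _, h3⟩
    · exfalso
      have h1 : head e = u (i+t) := (congrArg Prod.fst hpair).symm
      rw [← heq] at h2'
      rw [h1] at h2'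
      exact hne (i+t) h2'
    · rw [heq]; exact h3
end Flow

section Chord
variable [Fintype E] (k : Type*) [CommRing k] (tail head : E → V)

lemma end_mem_tail_support {G : SimpleGraph V} {u v : V} (p : G.Walk u v) (h : p.length ≠ 0) :
    v ∈ p.support.tail := by
  cases p with
  | nil => simp at h
  | cons h' q =>
      rw [SimpleGraph.Walk.support_cons, List.tail_cons]
      exact q.end_mem_support

lemma edge_mem_of_length_one {G : SimpleGraph V} {u v : V} (p : G.Walk u v)
    (h : p.length = 1) : s(u, v) ∈ p.edges := by
  cases p with
  | nil => simp at h
  | cons h' q =>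
      rw [SimpleGraph.Walk.length_cons] at h
      have hq : q.length = 0 := by omega
      have hqe := SimpleGraph.Walk.eq_of_length_eq_zero hq
      rw [SimpleGraph.Walk.edges_cons]
      exact List.mem_cons.mpr (Or.inl (by rw [hqe]))

lemma cycBinom_eq {G : SimpleGraph V} {v : V} (c : G.Walk v v) :
    cycBinom k tail head c
      = (∏ e ∈ Fp tail head c, MvPolynomial.X e) - ∏ e ∈ Fm tail head c, MvPolynomial.X e := rfl

lemma cycBinom_rotate {G : SimpleGraph V} {v x : V} (c : G.Walk v v) (hx : x ∈ c.support) :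
    cycBinom k tail head (c.rotate x hx) = cycBinom k tail head c := by
  have hmem : ∀ pr : V × V, pr ∈ (c.rotate x hx).darts.map SimpleGraph.Dart.toProd
      ↔ pr ∈ c.darts.map SimpleGraph.Dart.toProd :=
    fun pr => ((c.rotate_darts x hx).map _).perm.mem_iff
  rw [cycBinom_eq, cycBinom_eq]
  refine congrArg₂ (· - ·) ?_ ?_ <;>
    exact Finset.prod_congr (Finset.filter_congr fun e _ => by rw [hmem]) (fun _ _ => rfl)

lemma mem_support_rotate {G : SimpleGraph V} {v x y : V} (c : G.Walk v v) (hx : x ∈ c.support)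
    (hnil : c.length ≠ 0) (hy : y ∈ c.support) : y ∈ (c.rotate x hx).support := by
  have hperm := c.support_rotate x hx
  have h1 : y ∈ c.support.tail := by
    rw [c.support_eq_cons] at hy
    rcases List.mem_cons.mp hy with rfl | h
    · exact end_mem_tail_support c hnil
    · exact h
  have h2 : y ∈ (c.rotate x hx).support.tail := hperm.perm.mem_iff.mpr h1
  exact List.mem_of_mem_tail h2

lemma chord_split (ho : IsOrientation tail head) (e0 : E)
    (c : (ograph tail head).Walk (tail e0) (tail e0)) (hc : c.IsCycle)
    (hb : head e0 ∈ c.support) (hs : s(tail e0, head e0) ∉ c.edges) :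
    ∃ (c1 c2 : (ograph tail head).Walk (tail e0) (tail e0)) (f g : MvPolynomial E k),
      c1.IsCycle ∧ c2.IsCycle ∧ c1.length < c.length ∧ c2.length < c.length ∧
      cycBinom k tail head c
        = f * cycBinom k tail head c1 + g * cycBinom k tail head c2 := by
  classical
  have hab : tail e0 ≠ head e0 := ho.1 e0
  obtain ⟨p1, p2, hspec⟩ :
      ∃ (p1 : (ograph tail head).Walk (tail e0) (head e0))
        (p2 : (ograph tail head).Walk (head e0) (tail e0)), p1.append p2 = c :=
    ⟨c.takeUntil _ hb, c.dropUntil _ hb, c.take_spec hb⟩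
  rw [SimpleGraph.Walk.isCycle_def] at hc
  obtain ⟨htrail, hnenil, hsupnodup⟩ := hc
  have hedges : c.edges = p1.edges ++ p2.edges := by
    rw [← hspec, SimpleGraph.Walk.edges_append]
  have hednodup := htrail.edges_nodup
  rw [hedges, List.nodup_append'] at hednodup
  obtain ⟨hed1, hed2, heddisj⟩ := hednodup
  have hsup : c.support.tail = p1.support.tail ++ p2.support.tail := by
    rw [← hspec, SimpleGraph.Walk.support_append,
      List.tail_append_of_ne_nil (SimpleGraph.Walk.support_ne_nil _)]
  rw [hsup, List.nodup_append'] at hsupnodup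
  obtain ⟨hsup1, hsup2, hsupdisj⟩ := hsupnodup
  have hlen : p1.length + p2.length = c.length := by
    have := congrArg SimpleGraph.Walk.length hspec
    rw [SimpleGraph.Walk.length_append] at this
    exact this
  have hp1pos : p1.length ≠ 0 := fun h => hab (SimpleGraph.Walk.eq_of_length_eq_zero h)
  have hp2pos : p2.length ≠ 0 := fun h =>
    hab (SimpleGraph.Walk.eq_of_length_eq_zero h).symm
  have hp1ne1 : p1.length ≠ 1 := by
    intro h
    exact hs (hedges ▸ List.mem_append_left _ (edge_mem_of_length_one p1 h))
  have hp2ne1 : p2.length ≠ 1 := by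
    intro h
    have := edge_mem_of_length_one p2 h
    rw [Sym2.eq_swap] at this
    exact hs (hedges ▸ List.mem_append_right _ this)
  have hadjab : (ograph tail head).Adj (tail e0) (head e0) := adj_of_edge tail head ho e0
  set c1 : (ograph tail head).Walk (tail e0) (tail e0)
    := p1.append (SimpleGraph.Walk.cons hadjab.symm SimpleGraph.Walk.nil) with hc1
  set c2 : (ograph tail head).Walk (tail e0) (tail e0)
    := SimpleGraph.Walk.cons hadjab p2 with hc2
  have hsab : s(tail e0, head e0) ∉ p1.edges :=
    fun h => hs (hedges ▸ List.mem_append_left _ h)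
  have hsab2 : s(tail e0, head e0) ∉ p2.edges :=
    fun h => hs (hedges ▸ List.mem_append_right _ h)
  have hbmem : head e0 ∈ p1.support.tail := end_mem_tail_support p1 hp1pos
  have hamem : tail e0 ∈ p2.support.tail := end_mem_tail_support p2 hp2pos
  -- c1 is a cycle
  have hc1edges : c1.edges = p1.edges ++ [s(head e0, tail e0)] := by
    rw [hc1, SimpleGraph.Walk.edges_append, SimpleGraph.Walk.edges_cons,
      SimpleGraph.Walk.edges_nil]
  have hc1sup : c1.support.tail = p1.support.tail ++ [tail e0] := by
    rw [hc1, SimpleGraph.Walk.support_append,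
      List.tail_append_of_ne_nil (SimpleGraph.Walk.support_ne_nil _)]
    rfl
  have hc1cyc : c1.IsCycle := by
    rw [SimpleGraph.Walk.isCycle_def]
    refine ⟨⟨?_⟩, ?_, ?_⟩
    · rw [hc1edges, List.nodup_append']
      refine ⟨hed1, List.nodup_singleton _, ?_⟩
      intro x hx hx2
      rw [List.mem_singleton] at hx2
      rw [hx2, Sym2.eq_swap] at hx
      exact hsab hx
    · intro h
      have := congrArg SimpleGraph.Walk.length h
      rw [hc1, SimpleGraph.Walk.length_append, SimpleGraph.Walk.length_cons,
        SimpleGraph.Walk.length_nil] at this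
      omega
    · rw [hc1sup, List.nodup_append']
      refine ⟨hsup1, List.nodup_singleton _, ?_⟩
      intro x hx hx2
      rw [List.mem_singleton] at hx2
      subst hx2
      exact hsupdisj hx hamem
  have hc2cyc : c2.IsCycle := by
    rw [SimpleGraph.Walk.isCycle_def]
    refine ⟨⟨?_⟩, ?_, ?_⟩
    · rw [hc2, SimpleGraph.Walk.edges_cons, List.nodup_cons]
      exact ⟨hsab2, hed2⟩
    · rw [hc2]
      intro hcontr
      have := congrArg SimpleGraph.Walk.length hcontr
      rw [SimpleGraph.Walk.length_cons, SimpleGraph.Walk.length_nil] at this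
      omega
    · rw [hc2, SimpleGraph.Walk.support_cons, List.tail_cons, p2.support_eq_cons,
        List.nodup_cons]
      refine ⟨?_, hsup2⟩
      intro h
      exact hsupdisj hbmem h
  -- lengths
  have hc1len : c1.length < c.length := by
    rw [hc1, SimpleGraph.Walk.length_append, SimpleGraph.Walk.length_cons,
      SimpleGraph.Walk.length_nil]
    omega
  have hc2len : c2.length < c.length := by
    rw [hc2, SimpleGraph.Walk.length_cons]
    omega
  -- edge uniqueness facts
  have huniqab : ∀ e : E, (tail e, head e) = (tail e0, head e0) → e = e0 := by
    intro e h
    exact ho.2 (show s(tail e, head e) = s(tail e0, head e0) by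
      rw [show tail e = tail e0 from congrArg Prod.fst h,
        show head e = head e0 from congrArg Prod.snd h])
  have huniqba : ∀ e : E, (head e, tail e) = (head e0, tail e0) → e = e0 := by
    intro e h
    exact ho.2 (show s(tail e, head e) = s(tail e0, head e0) by
      rw [show tail e = tail e0 from congrArg Prod.snd h,
        show head e = head e0 from congrArg Prod.fst h])
  have hnotba : ∀ e : E, (tail e, head e) = (head e0, tail e0) → False := by
    intro e h
    have he : e = e0 := ho.2 (show s(tail e, head e) = s(tail e0, head e0) by
      rw [show tail e = head e0 from congrArg Prod.fst h,
        show head e = tail e0 from congrArg Prod.snd h]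
      exact Sym2.eq_swap)
    rw [he] at h
    exact hab (congrArg Prod.snd h).symm
  have hnotab : ∀ e : E, (head e, tail e) = (tail e0, head e0) → False := by
    intro e h
    have he : e = e0 := ho.2 (show s(tail e, head e) = s(tail e0, head e0) by
      rw [show tail e = head e0 from congrArg Prod.snd h,
        show head e = tail e0 from congrArg Prod.fst h]
      exact Sym2.eq_swap)
    rw [he] at h
    exact hab (congrArg Prod.fst h).symm
  -- filters
  have hFpc : Fp tail head c = Fp tail head p1 ∪ Fp tail head p2 := by
    ext e
    rw [Finset.mem_union, mem_Fp_iff, mem_Fp_iff, mem_Fp_iff, ← hspec,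
      SimpleGraph.Walk.darts_append, List.map_append, List.mem_append]
  have hFmc : Fm tail head c = Fm tail head p1 ∪ Fm tail head p2 := by
    ext e
    rw [Finset.mem_union, mem_Fm_iff, mem_Fm_iff, mem_Fm_iff, ← hspec,
      SimpleGraph.Walk.darts_append, List.map_append, List.mem_append]
  have hdartc1 : c1.darts.map SimpleGraph.Dart.toProd
      = p1.darts.map SimpleGraph.Dart.toProd ++ [(head e0, tail e0)] := by
    rw [hc1, SimpleGraph.Walk.darts_append, SimpleGraph.Walk.darts_cons,
      SimpleGraph.Walk.darts_nil, List.map_append]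
    rfl
  have hdartc2 : c2.darts.map SimpleGraph.Dart.toProd
      = (tail e0, head e0) :: p2.darts.map SimpleGraph.Dart.toProd := by
    rw [hc2, SimpleGraph.Walk.darts_cons, List.map_cons]
  have hFpc1 : Fp tail head c1 = Fp tail head p1 := by
    ext e
    rw [mem_Fp_iff, mem_Fp_iff, hdartc1, List.mem_append]
    constructor
    · rintro (h | h)
      · exact h
      · rw [List.mem_singleton] at h
        exact absurd h (fun h' => hnotba e h')
    · exact Or.inl
  have hFmc1 : Fm tail head c1 = insert e0 (Fm tail head p1) := by
    ext e
    rw [Finset.mem_insert, mem_Fm_iff, mem_Fm_iff, hdartc1, List.mem_append]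
    constructor
    · rintro (h | h)
      · exact Or.inr h
      · rw [List.mem_singleton] at h
        exact Or.inl (huniqba e h)
    · rintro (rfl | h)
      · exact Or.inr (List.mem_singleton.mpr rfl)
      · exact Or.inl h
  have hFpc2 : Fp tail head c2 = insert e0 (Fp tail head p2) := by
    ext e
    rw [Finset.mem_insert, mem_Fp_iff, mem_Fp_iff, hdartc2, List.mem_cons]
    constructor
    · rintro (h | h)
      · exact Or.inl (huniqab e h)
      · exact Or.inr h
    · rintro (rfl | h)
      · exact Or.inl rfl
      · exact Or.inr h
  have hFmc2 : Fm tail head c2 = Fm tail head p2 := by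
    ext e
    rw [mem_Fm_iff, mem_Fm_iff, hdartc2, List.mem_cons]
    constructor
    · rintro (h | h)
      · exact absurd h (fun h' => hnotab e h')
      · exact h
    · exact Or.inr
  -- disjointness for products
  have hdisjp : Disjoint (Fp tail head p1) (Fp tail head p2) := by
    rw [Finset.disjoint_left]
    intro e h1 h2
    exact heddisj (edge_mem_of_mem_Fp tail head p1 h1) (edge_mem_of_mem_Fp tail head p2 h2)
  have hdisjm : Disjoint (Fm tail head p1) (Fm tail head p2) := by
    rw [Finset.disjoint_left]
    intro e h1 h2
    exact heddisj (edge_mem_of_mem_Fm tail head p1 h1) (edge_mem_of_mem_Fm tail head p2 h2)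
  have he0m1 : e0 ∉ Fm tail head p1 := fun h => hsab (edge_mem_of_mem_Fm tail head p1 h)
  have he0p2 : e0 ∉ Fp tail head p2 := fun h => hsab2 (edge_mem_of_mem_Fp tail head p2 h)
  -- products
  refine ⟨c1, c2, ∏ e ∈ Fp tail head p2, MvPolynomial.X e,
    ∏ e ∈ Fm tail head p1, MvPolynomial.X e, hc1cyc, hc2cyc, hc1len, hc2len, ?_⟩
  rw [cycBinom_eq, cycBinom_eq, cycBinom_eq, hFpc, hFmc, hFpc1, hFmc1, hFpc2, hFmc2,
    Finset.prod_union hdisjp, Finset.prod_union hdisjm, Finset.prod_insert he0m1,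
    Finset.prod_insert he0p2]
  ring

def primIdeal (k : Type*) [CommRing k] (tail head : E → V) : Ideal (MvPolynomial E k) :=
  Ideal.span {f | ∃ (v : V) (c : (ograph tail head).Walk v v),
    IsPrimitiveCycle (ograph tail head) c ∧ f = cycBinom k tail head c}

lemma cycBinom_mem_primIdeal (ho : IsOrientation tail head) {v : V}
    (c : (ograph tail head).Walk v v) (hc : c.IsCycle) :
    cycBinom k tail head c ∈ primIdeal k tail head := by
  classical
  suffices H : ∀ (n : ℕ) {v : V} (c : (ograph tail head).Walk v v), c.IsCycle →
      c.length ≤ n → cycBinom k tail head c ∈ primIdeal k tail head from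
    H c.length c hc le_rfl
  intro n
  induction n using Nat.strong_induction_on with
  | _ n ih =>
  intro v c hc hlen
  by_cases hprim : IsPrimitiveCycle (ograph tail head) c
  · exact Ideal.subset_span ⟨v, c, hprim, rfl⟩
  · have hex : ∃ x y, x ∈ c.support ∧ y ∈ c.support ∧ (ograph tail head).Adj x y
        ∧ s(x, y) ∉ c.edges := by
      by_contra hcon
      push_neg at hcon
      exact hprim ⟨hc, fun x y hx hy hadj => hcon x y hx hy hadj⟩
    obtain ⟨x, y, hx, hy, hadj, hsxy⟩ := hex
    obtain ⟨e0, he0⟩ := exists_edge tail head hadj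
    have hkey : tail e0 ∈ c.support ∧ head e0 ∈ c.support
        ∧ s(tail e0, head e0) ∉ c.edges := by
      rcases he0 with ⟨h1, h2⟩ | ⟨h1, h2⟩
      · exact ⟨h1.symm ▸ hx, h2.symm ▸ hy, by rw [h1, h2]; exact hsxy⟩
      · refine ⟨h1.symm ▸ hy, h2.symm ▸ hx, ?_⟩
        rw [h1, h2, Sym2.eq_swap]
        exact hsxy
    obtain ⟨hta, hha, hse⟩ := hkey
    have hlen0 : c.length ≠ 0 := by
      have := hc.three_le_length
      omega
    set c' := c.rotate (tail e0) hta with hc'def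
    have hc' : c'.IsCycle := hc.rotate hta
    have hlenrot : c'.length = c.length := by
      have h1 := (c.rotate_darts (tail e0) hta).perm.length_eq
      rw [SimpleGraph.Walk.length_darts, SimpleGraph.Walk.length_darts] at h1
      exact h1
    have hb' : head e0 ∈ c'.support := mem_support_rotate c hta hlen0 hha
    have hs' : s(tail e0, head e0) ∉ c'.edges :=
      fun h => hse ((c.rotate_edges (tail e0) hta).perm.mem_iff.mp h)
    obtain ⟨c1, c2, f, g, hcyc1, hcyc2, hl1, hl2, heq⟩ :=
      chord_split k tail head ho e0 c' hc' hb' hs'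
    rw [← cycBinom_rotate k tail head c hta, ← hc'def, heq]
    refine Ideal.add_mem _ ?_ ?_
    · exact Ideal.mul_mem_left _ _ (ih c1.length (by omega) c1 hcyc1 le_rfl)
    · exact Ideal.mul_mem_left _ _ (ih c2.length (by omega) c2 hcyc2 le_rfl)

lemma Mn_add (a b : E → ℕ) : Mn k (fun e => a e + b e) = Mn k a * Mn k b := by
  rw [Mn, Mn, Mn, ← Finset.prod_mul_distrib]
  exact Finset.prod_congr rfl fun e _ => pow_add _ _ _

lemma Mn_indicator (S : Finset E) :
    Mn k (fun e => if e ∈ S then 1 else 0) = ∏ e ∈ S, MvPolynomial.X e := by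
  rw [Mn, ← Finset.prod_filter_mul_prod_filter_not Finset.univ (· ∈ S)]
  have h1 : ∀ e ∈ Finset.univ.filter (· ∈ S),
      (MvPolynomial.X e : MvPolynomial E k) ^ (if e ∈ S then 1 else 0) = MvPolynomial.X e := by
    intro e he
    rw [if_pos (Finset.mem_filter.mp he).2, pow_one]
  have h2 : ∀ e ∈ Finset.univ.filter (¬ · ∈ S),
      (MvPolynomial.X e : MvPolynomial E k) ^ (if e ∈ S then 1 else 0) = 1 := by
    intro e he
    rw [if_neg (Finset.mem_filter.mp he).2, pow_zero]
  rw [Finset.prod_congr rfl h1, Finset.prod_congr rfl h2, Finset.prod_const_one, mul_one]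
  congr 1
  ext e
  simp

lemma wt_add (a b : E → ℕ) :
    wt tail head (fun e => a e + b e) = wt tail head a + wt tail head b := by
  funext x
  rw [wt]
  show _ = wt tail head a x + wt tail head b x
  rw [wt, wt, ← Finset.sum_add_distrib]
  refine Finset.sum_congr rfl fun e _ => ?_
  push_cast
  ring

lemma binom_mem (ho : IsOrientation tail head) [Fintype V] (a b : E → ℕ)
    (hw : wt tail head a = wt tail head b) :
    Mn k a - Mn k b ∈ primIdeal k tail head := by
  classical
  suffices H : ∀ (N : ℕ) (a b : E → ℕ), wt tail head a = wt tail head b →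
      (∑ e, (a e + b e)) ≤ N → Mn k a - Mn k b ∈ primIdeal k tail head from
    H _ a b hw le_rfl
  clear hw a b
  intro N
  induction N using Nat.strong_induction_on with
  | _ N ih =>
  intro a b hw hsum
  by_cases hab : a = b
  · rw [hab, sub_self]
    exact Ideal.zero_mem _
  set d : E → ℤ := fun e => (a e : ℤ) - b e with hd_def
  have hd : d ≠ 0 := by
    intro h
    apply hab
    funext e
    have := congrFun h e
    simp only [hd_def, Pi.zero_apply] at this
    omega
  have hcons : ∀ x, ∑ e, d e * incVec tail head e x = 0 := by
    intro x
    have h1 := congrFun hw x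
    rw [wt, wt] at h1
    rw [show ∑ e, d e * incVec tail head e x
        = (∑ e, (a e : ℤ) * incVec tail head e x) - ∑ e, (b e : ℤ) * incVec tail head e x by
      rw [← Finset.sum_sub_distrib]
      exact Finset.sum_congr rfl fun e _ => by rw [hd_def]; ring]
    rw [h1, sub_self]
  obtain ⟨v, c, hc, hfp, hfm⟩ := exists_conformal_cycle tail head ho d hd hcons
  set A := Fp tail head c with hA
  set B := Fm tail head c with hB
  have hAa : ∀ e ∈ A, 1 ≤ a e := by
    intro e he
    have := hfp e he
    simp only [hd_def] at this
    omega
  have hBb : ∀ e ∈ B, 1 ≤ b e := by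
    intro e he
    have := hfm e he
    simp only [hd_def] at this
    omega
  set chiA : E → ℕ := fun e => if e ∈ A then 1 else 0 with hchiA
  set chiB : E → ℕ := fun e => if e ∈ B then 1 else 0 with hchiB
  set a' : E → ℕ := fun e => a e - chiA e with ha'
  set b' : E → ℕ := fun e => b e - chiB e with hb'
  have haeq : a = fun e => chiA e + a' e := by
    funext e
    simp only [ha', hchiA]
    by_cases he : e ∈ A
    · have := hAa e he
      simp [he]
      omega
    · simp [he]
  have hbeq : b = fun e => chiB e + b' e := by
    funext e
    simp only [hb', hchiB]
    by_cases he : e ∈ B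
    · have := hBb e he
      simp [he]
      omega
    · simp [he]
  have hMa : Mn k a = Mn k chiA * Mn k a' := by
    conv_lhs => rw [haeq]
    exact Mn_add k _ _
  have hMb : Mn k b = Mn k chiB * Mn k b' := by
    conv_lhs => rw [hbeq]
    exact Mn_add k _ _
  -- edges nodup for cycle_balance
  have hcednodup : c.edges.Nodup := by
    rw [SimpleGraph.Walk.isCycle_def] at hc
    exact hc.1.edges_nodup
  have hbal := cycle_balance tail head ho c hcednodup
  have hwchi : wt tail head chiA = wt tail head chiB := by
    funext x
    rw [wt, wt]
    have h1 : ∀ e : E, (chiA e : ℤ) * incVec tail head e x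
        = if e ∈ A then incVec tail head e x else 0 := by
      intro e
      simp only [hchiA]
      by_cases he : e ∈ A <;> simp [he]
    have h2 : ∀ e : E, (chiB e : ℤ) * incVec tail head e x
        = if e ∈ B then incVec tail head e x else 0 := by
      intro e
      simp only [hchiB]
      by_cases he : e ∈ B <;> simp [he]
    rw [Finset.sum_congr rfl (fun e _ => h1 e), Finset.sum_congr rfl (fun e _ => h2 e),
      Finset.sum_ite_mem, Finset.sum_ite_mem, Finset.univ_inter, Finset.univ_inter]
    have hbx := congrFun hbal x
    rw [Finset.sum_apply, Finset.sum_apply] at hbx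
    exact hbx
  have hwa' : wt tail head a' = wt tail head b' := by
    have h1 : wt tail head a = wt tail head chiA + wt tail head a' := by
      conv_lhs => rw [haeq]
      exact wt_add tail head _ _
    have h2 : wt tail head b = wt tail head chiB + wt tail head b' := by
      conv_lhs => rw [hbeq]
      exact wt_add tail head _ _
    have h3 : wt tail head chiA + wt tail head a'
        = wt tail head chiB + wt tail head b' := by
      rw [← h1, ← h2]
      exact hw
    rw [hwchi] at h3
    exact add_left_cancel h3
  have hid : Mn k a - Mn k b = cycBinom k tail head c * Mn k a'
      + Mn k chiB * (Mn k a' - Mn k b') := by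
    have hcA : Mn k chiA = ∏ e ∈ A, MvPolynomial.X e := by
      rw [hchiA]
      exact Mn_indicator k A
    have hcB : Mn k chiB = ∏ e ∈ B, MvPolynomial.X e := by
      rw [hchiB]
      exact Mn_indicator k B
    rw [hMa, hMb, cycBinom_eq, ← hA, ← hB, ← hcA, ← hcB]
    ring
  -- the measure decreases
  obtain ⟨d0, hd0⟩ : ∃ d0, d0 ∈ c.darts := by
    have h3 := hc.three_le_length
    rcases hl : c.darts with _ | ⟨d0, l⟩
    · exfalso
      have h4 : c.darts.length = 0 := by rw [hl]; rfl
      rw [SimpleGraph.Walk.length_darts] at h4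
      omega
    · exact ⟨d0, List.mem_cons_self⟩
  have hwitness : ∃ estar : E, 1 ≤ chiA estar + chiB estar := by
    obtain ⟨e, he⟩ := exists_edge tail head d0.adj
    rcases he with ⟨h1, h2⟩ | ⟨h1, h2⟩
    · refine ⟨e, ?_⟩
      have heA : e ∈ A := by
        rw [hA, mem_Fp_iff]
        exact List.mem_map.mpr ⟨d0, hd0, by rw [h1, h2]⟩
      simp [hchiA, heA]
    · refine ⟨e, ?_⟩
      have heB : e ∈ B := by
        rw [hB, mem_Fm_iff]
        exact List.mem_map.mpr ⟨d0, hd0, by rw [h1, h2]⟩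
      simp [hchiB, heB]
  obtain ⟨estar, hestar⟩ := hwitness
  have hone : 1 ≤ ∑ e, (chiA e + chiB e) :=
    le_trans hestar (Finset.single_le_sum (f := fun e => chiA e + chiB e)
      (fun e _ => Nat.zero_le _) (Finset.mem_univ estar))
  have hsplit : ∑ e, (a e + b e) = ∑ e, (chiA e + chiB e) + ∑ e, (a' e + b' e) := by
    rw [← Finset.sum_add_distrib]
    refine Finset.sum_congr rfl fun e _ => ?_
    have h1 := congrFun haeq e
    have h2 := congrFun hbeq e
    omega
  rw [hid]
  refine Ideal.add_mem _ ?_ ?_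
  · exact Ideal.mul_mem_right _ _ (cycBinom_mem_primIdeal k tail head ho c hc)
  · refine Ideal.mul_mem_left _ _ (ih (∑ e, (a' e + b' e)) (by omega) a' b' hwa' le_rfl)
end Chord
end Graph


/-- The toric ideal of a connected oriented graph is generated by the
binomials `t_c` of its primitive (chordless) cycles. -/
theorem toricIdeal_eq_span_primitive_cycle_binomials
    [Fintype V] [Fintype E] (k : Type*) [Field k] (tail head : E → V)
    (ho : IsOrientation tail head) (hconn : (ograph tail head).Connected) :
    toricIdeal k tail head =
      Ideal.span {f | ∃ (v : V) (c : (ograph tail head).Walk v v),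
        IsPrimitiveCycle (ograph tail head) c ∧ f = cycBinom k tail head c} := by
  classical
  have hJ : Ideal.span {f | ∃ (v : V) (c : (ograph tail head).Walk v v),
      IsPrimitiveCycle (ograph tail head) c ∧ f = cycBinom k tail head c}
      = primIdeal k tail head := rfl
  rw [hJ]
  apply le_antisymm
  · intro f hf
    have hker : phi k tail head f = 0 := hf
    exact mem_span_of_ker k tail head (primIdeal k tail head)
      (fun a b hab => binom_mem k tail head ho a b hab) f hker
  · rw [primIdeal, Ideal.span_le]
    rintro f ⟨v, c, ⟨hcyc, _⟩, rfl⟩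
    rw [SetLike.mem_coe]
    show phi k tail head (cycBinom k tail head c) = 0
    have hednodup : c.edges.Nodup := by
      rw [SimpleGraph.Walk.isCycle_def] at hcyc
      exact hcyc.1.edges_nodup
    have hbal := cycle_balance tail head ho c hednodup
    rw [cycBinom_eq, map_sub]
    have hprod : ∀ s : Finset E, phi k tail head (∏ e ∈ s, MvPolynomial.X e)
        = AddMonoidAlgebra.single (fun x => ∑ e ∈ s, incVec tail head e x) (1 : k) := by
      intro s
      have h1 : (∏ e ∈ s, MvPolynomial.X e : MvPolynomial E k)
          = ∏ e ∈ s, MvPolynomial.X e ^ (1 : ℕ) :=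
        Finset.prod_congr rfl fun e _ => (pow_one _).symm
      rw [h1, phi_prod_pow]
      congr 1
      funext x
      exact Finset.sum_congr rfl fun e _ => one_mul _
    rw [hprod, hprod]
    have hfun : (fun x => ∑ e ∈ Fp tail head c, incVec tail head e x)
        = (fun x => ∑ e ∈ Fm tail head c, incVec tail head e x) := by
      funext x
      have := congrFun hbal x
      rw [Finset.sum_apply, Finset.sum_apply] at this
      exact this
    rw [hfun, sub_self]


end RingGraphs
end
end

section
/- Let D be an oriented graph, c = {x_1,...,x_r,x_1} a cycle of D, and suppose (x_i,x_j) or (x_j,x_i) is an edge of D with i+1 < j. Let c_1 = {x_1,...,x_i,x_j,x_{j+1},...,x_r,x_1} and c_2 = {x_i,x_{i+1},...,x_j,x_i}. Then the binomial t_c lies in the ideal generated by t_{c_1} and t_{c_2}; indeed, t_c is a polynomial-linear combination of t_{c_1} and t_{c_2}. -/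
open SimpleGraph Finset
open scoped Classical

noncomputable section

namespace RingGraphs

variable {V E : Type*}

private lemma edge_mem_of_mem_darts_map {G : SimpleGraph V} {u v : V} {w : G.Walk u v}
    {x y : V} (h : (x, y) ∈ w.darts.map SimpleGraph.Dart.toProd) :
    s(x, y) ∈ w.edges := by
  obtain ⟨d, hd, hxy⟩ := List.mem_map.1 h
  have : s(x, y) = d.edge := by
    simp only [SimpleGraph.Dart.edge, ← hxy]
    rw [hxy]
  rw [this, SimpleGraph.Walk.edges]
  exact List.mem_map_of_mem hd

/-- Let `c` be a cycle of an oriented graph, split at two of its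
vertices `a`, `b` as `c = q₁ ++ q₂`, and suppose `a` and `b` are joined by a chord (an
edge of the graph not lying on `c`).  With `c₁` obtained from the chord followed by
`q₂`, and `c₂` obtained from `q₁` followed by the chord, the binomial `t_c` is a
polynomial-linear combination of `t_{c₁}` and `t_{c₂}`; in particular it lies in the
ideal they generate. -/
theorem cycBinom_mem_span_of_chord
    [Fintype V] [Fintype E] (k : Type*) [Field k] (tail head : E → V)
    (ho : IsOrientation tail head) (a b : V)
    (q₁ : (ograph tail head).Walk a b) (q₂ : (ograph tail head).Walk b a)
    (hadj : (ograph tail head).Adj a b)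
    (hcyc : (q₁.append q₂).IsCycle)
    (hchord : s(a, b) ∉ (q₁.append q₂).edges) :
    (∃ p₁ p₂ : MvPolynomial E k,
      cycBinom k tail head (q₁.append q₂) =
        p₁ * cycBinom k tail head (SimpleGraph.Walk.cons hadj q₂) +
        p₂ * cycBinom k tail head
          (q₁.append (SimpleGraph.Walk.cons hadj.symm SimpleGraph.Walk.nil))) ∧
    cycBinom k tail head (q₁.append q₂) ∈
      Ideal.span {cycBinom k tail head (SimpleGraph.Walk.cons hadj q₂),
        cycBinom k tail head
          (q₁.append (SimpleGraph.Walk.cons hadj.symm SimpleGraph.Walk.nil))} := by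
  classical
  have hab : a ≠ b := hadj.ne
  -- notations
  set P₁ : MvPolynomial E k := ∏ e ∈ Finset.univ.filter
      (fun e => (tail e, head e) ∈ q₁.darts.map SimpleGraph.Dart.toProd),
      MvPolynomial.X e with hP₁
  set M₁ : MvPolynomial E k := ∏ e ∈ Finset.univ.filter
      (fun e => (head e, tail e) ∈ q₁.darts.map SimpleGraph.Dart.toProd),
      MvPolynomial.X e with hM₁
  set P₂ : MvPolynomial E k := ∏ e ∈ Finset.univ.filter
      (fun e => (tail e, head e) ∈ q₂.darts.map SimpleGraph.Dart.toProd),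
      MvPolynomial.X e with hP₂
  set M₂ : MvPolynomial E k := ∏ e ∈ Finset.univ.filter
      (fun e => (head e, tail e) ∈ q₂.darts.map SimpleGraph.Dart.toProd),
      MvPolynomial.X e with hM₂
  -- edges of q₁ and q₂ are disjoint
  have hnd : ((q₁.append q₂).edges).Nodup := hcyc.edges_nodup
  rw [SimpleGraph.Walk.edges_append] at hnd
  have hdisj : ∀ s : Sym2 V, s ∈ q₁.edges → s ∉ q₂.edges :=
    fun s hs => (List.disjoint_of_nodup_append hnd) hs
  have hch₁ : s(a, b) ∉ q₁.edges := fun h =>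
    hchord (by rw [SimpleGraph.Walk.edges_append]; exact List.mem_append_left _ h)
  have hch₂ : s(a, b) ∉ q₂.edges := fun h =>
    hchord (by rw [SimpleGraph.Walk.edges_append]; exact List.mem_append_right _ h)
  -- t_c = P₁P₂ - M₁M₂
  have hc : cycBinom k tail head (q₁.append q₂) = P₁ * P₂ - M₁ * M₂ := by
    have hFd : Disjoint
        (Finset.univ.filter (fun e => (tail e, head e) ∈ q₁.darts.map SimpleGraph.Dart.toProd))
        (Finset.univ.filter (fun e => (tail e, head e) ∈ q₂.darts.map SimpleGraph.Dart.toProd)) := by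
      rw [Finset.disjoint_left]
      intro e he₁ he₂
      exact hdisj _ (edge_mem_of_mem_darts_map (Finset.mem_filter.1 he₁).2)
        (edge_mem_of_mem_darts_map (Finset.mem_filter.1 he₂).2)
    have hMd : Disjoint
        (Finset.univ.filter (fun e => (head e, tail e) ∈ q₁.darts.map SimpleGraph.Dart.toProd))
        (Finset.univ.filter (fun e => (head e, tail e) ∈ q₂.darts.map SimpleGraph.Dart.toProd)) := by
      rw [Finset.disjoint_left]
      intro e he₁ he₂
      exact hdisj _ (edge_mem_of_mem_darts_map (Finset.mem_filter.1 he₁).2)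
        (edge_mem_of_mem_darts_map (Finset.mem_filter.1 he₂).2)
    have hF : Finset.univ.filter
        (fun e => (tail e, head e) ∈ (q₁.append q₂).darts.map SimpleGraph.Dart.toProd) =
        Finset.univ.filter (fun e => (tail e, head e) ∈ q₁.darts.map SimpleGraph.Dart.toProd) ∪
        Finset.univ.filter (fun e => (tail e, head e) ∈ q₂.darts.map SimpleGraph.Dart.toProd) := by
      ext e
      simp [SimpleGraph.Walk.darts_append]
    have hM : Finset.univ.filter
        (fun e => (head e, tail e) ∈ (q₁.append q₂).darts.map SimpleGraph.Dart.toProd) =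
        Finset.univ.filter (fun e => (head e, tail e) ∈ q₁.darts.map SimpleGraph.Dart.toProd) ∪
        Finset.univ.filter (fun e => (head e, tail e) ∈ q₂.darts.map SimpleGraph.Dart.toProd) := by
      ext e
      simp [SimpleGraph.Walk.darts_append]
    rw [cycBinom, hF, hM, Finset.prod_union hFd, Finset.prod_union hMd]
  -- the chord edge
  have hor : ∃ e, (tail e = a ∧ head e = b) ∨ (tail e = b ∧ head e = a) := by
    have := hadj
    rw [ograph, SimpleGraph.fromRel_adj] at this
    obtain ⟨-, h | h⟩ := this
    · obtain ⟨e, he⟩ := h; exact ⟨e, Or.inl he⟩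
    · obtain ⟨e, he⟩ := h; exact ⟨e, Or.inr he⟩
  obtain ⟨e₀, he₀⟩ := hor
  have huniq : ∀ e x y, tail e = x → head e = y → s(x, y) = s(a, b) → e = e₀ := by
    intro e x y hx hy hxy
    apply ho.2
    simp only
    rw [hx, hy, hxy]
    rcases he₀ with ⟨h1, h2⟩ | ⟨h1, h2⟩
    · rw [h1, h2]
    · rw [h1, h2, Sym2.eq_swap]
  have hd₁ : (SimpleGraph.Walk.cons hadj q₂).darts.map SimpleGraph.Dart.toProd =
      (a, b) :: q₂.darts.map SimpleGraph.Dart.toProd := by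
    simp [SimpleGraph.Walk.darts_cons]
  have hd₂ : (q₁.append (SimpleGraph.Walk.cons hadj.symm SimpleGraph.Walk.nil)).darts.map
      SimpleGraph.Dart.toProd = q₁.darts.map SimpleGraph.Dart.toProd ++ [(b, a)] := by
    simp [SimpleGraph.Walk.darts_append, SimpleGraph.Walk.darts_cons]
  rcases he₀ with ⟨ht₀, hh₀⟩ | ⟨ht₀, hh₀⟩
  · -- chord oriented a → b
    have hiff₁ : ∀ e, (tail e = a ∧ head e = b) ↔ e = e₀ := by
      intro e
      constructor
      · intro h; exact huniq e a b h.1 h.2 rfl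
      · rintro rfl; exact ⟨ht₀, hh₀⟩
    have hiff₂ : ∀ e, (head e = b ∧ tail e = a) ↔ e = e₀ := by
      intro e
      constructor
      · intro h; exact huniq e a b h.2 h.1 rfl
      · rintro rfl; exact ⟨hh₀, ht₀⟩
    have hne₁ : ∀ e, ¬(head e = a ∧ tail e = b) := by
      intro e h
      have he : e = e₀ := huniq e b a h.2 h.1 Sym2.eq_swap
      subst he
      exact hab (ht₀.symm.trans h.2)
    have hne₂ : ∀ e, ¬(tail e = b ∧ head e = a) := by
      intro e h
      have he : e = e₀ := huniq e b a h.1 h.2 Sym2.eq_swap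
      subst he
      exact hab (ht₀.symm.trans h.1)
    -- t_{c₁} = X e₀ * P₂ - M₂
    have he₀P₂ : e₀ ∉ Finset.univ.filter
        (fun e => (tail e, head e) ∈ q₂.darts.map SimpleGraph.Dart.toProd) := by
      intro h
      have := edge_mem_of_mem_darts_map (Finset.mem_filter.1 h).2
      rw [ht₀, hh₀] at this
      exact hch₂ this
    have hc₁ : cycBinom k tail head (SimpleGraph.Walk.cons hadj q₂) =
        MvPolynomial.X e₀ * P₂ - M₂ := by
      have hFc : Finset.univ.filter (fun e => (tail e, head e) ∈
          (SimpleGraph.Walk.cons hadj q₂).darts.map SimpleGraph.Dart.toProd) =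
          insert e₀ (Finset.univ.filter
            (fun e => (tail e, head e) ∈ q₂.darts.map SimpleGraph.Dart.toProd)) := by
        ext e
        simp [hd₁, hiff₁ e]
      have hMc : Finset.univ.filter (fun e => (head e, tail e) ∈
          (SimpleGraph.Walk.cons hadj q₂).darts.map SimpleGraph.Dart.toProd) =
          Finset.univ.filter
            (fun e => (head e, tail e) ∈ q₂.darts.map SimpleGraph.Dart.toProd) := by
        ext e
        simp [hd₁, hne₁ e]
      rw [cycBinom, hFc, hMc, Finset.prod_insert he₀P₂]
    -- t_{c₂} = P₁ - X e₀ * M₁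
    have he₀M₁ : e₀ ∉ Finset.univ.filter
        (fun e => (head e, tail e) ∈ q₁.darts.map SimpleGraph.Dart.toProd) := by
      intro h
      have := edge_mem_of_mem_darts_map (Finset.mem_filter.1 h).2
      rw [ht₀, hh₀, Sym2.eq_swap] at this
      exact hch₁ this
    have hc₂ : cycBinom k tail head
        (q₁.append (SimpleGraph.Walk.cons hadj.symm SimpleGraph.Walk.nil)) =
        P₁ - MvPolynomial.X e₀ * M₁ := by
      have hFc : Finset.univ.filter (fun e => (tail e, head e) ∈
          (q₁.append (SimpleGraph.Walk.cons hadj.symm SimpleGraph.Walk.nil)).darts.map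
            SimpleGraph.Dart.toProd) =
          Finset.univ.filter
            (fun e => (tail e, head e) ∈ q₁.darts.map SimpleGraph.Dart.toProd) := by
        ext e
        simp [hd₂, hne₂ e]
      have hMc : Finset.univ.filter (fun e => (head e, tail e) ∈
          (q₁.append (SimpleGraph.Walk.cons hadj.symm SimpleGraph.Walk.nil)).darts.map
            SimpleGraph.Dart.toProd) =
          insert e₀ (Finset.univ.filter
            (fun e => (head e, tail e) ∈ q₁.darts.map SimpleGraph.Dart.toProd)) := by
        ext e
        simp [hd₂, hiff₂ e, or_comm]
      rw [cycBinom, hFc, hMc, Finset.prod_insert he₀M₁]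
    refine ⟨⟨M₁, P₂, ?_⟩, ?_⟩
    · rw [hc, hc₁, hc₂]; ring
    · rw [Ideal.mem_span_pair]
      exact ⟨M₁, P₂, by rw [hc, hc₁, hc₂]; ring⟩
  · -- chord oriented b → a
    have hiff₁ : ∀ e, (head e = a ∧ tail e = b) ↔ e = e₀ := by
      intro e
      constructor
      · intro h; exact huniq e b a h.2 h.1 Sym2.eq_swap
      · rintro rfl; exact ⟨hh₀, ht₀⟩
    have hiff₂ : ∀ e, (tail e = b ∧ head e = a) ↔ e = e₀ := by
      intro e
      constructor
      · intro h; exact huniq e b a h.1 h.2 Sym2.eq_swap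
      · rintro rfl; exact ⟨ht₀, hh₀⟩
    have hne₁ : ∀ e, ¬(tail e = a ∧ head e = b) := by
      intro e h
      have he : e = e₀ := huniq e a b h.1 h.2 rfl
      subst he
      exact hab (h.1.symm.trans ht₀)
    have hne₂ : ∀ e, ¬(head e = b ∧ tail e = a) := by
      intro e h
      have he : e = e₀ := huniq e a b h.2 h.1 rfl
      subst he
      exact hab (hh₀.symm.trans h.1)
    -- t_{c₁} = P₂ - X e₀ * M₂
    have he₀M₂ : e₀ ∉ Finset.univ.filter
        (fun e => (head e, tail e) ∈ q₂.darts.map SimpleGraph.Dart.toProd) := by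
      intro h
      have := edge_mem_of_mem_darts_map (Finset.mem_filter.1 h).2
      rw [ht₀, hh₀] at this
      exact hch₂ this
    have hc₁ : cycBinom k tail head (SimpleGraph.Walk.cons hadj q₂) =
        P₂ - MvPolynomial.X e₀ * M₂ := by
      have hFc : Finset.univ.filter (fun e => (tail e, head e) ∈
          (SimpleGraph.Walk.cons hadj q₂).darts.map SimpleGraph.Dart.toProd) =
          Finset.univ.filter
            (fun e => (tail e, head e) ∈ q₂.darts.map SimpleGraph.Dart.toProd) := by
        ext e
        simp [hd₁, hne₁ e]
      have hMc : Finset.univ.filter (fun e => (head e, tail e) ∈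
          (SimpleGraph.Walk.cons hadj q₂).darts.map SimpleGraph.Dart.toProd) =
          insert e₀ (Finset.univ.filter
            (fun e => (head e, tail e) ∈ q₂.darts.map SimpleGraph.Dart.toProd)) := by
        ext e
        simp [hd₁, hiff₁ e]
      rw [cycBinom, hFc, hMc, Finset.prod_insert he₀M₂]
    -- t_{c₂} = X e₀ * P₁ - M₁
    have he₀P₁ : e₀ ∉ Finset.univ.filter
        (fun e => (tail e, head e) ∈ q₁.darts.map SimpleGraph.Dart.toProd) := by
      intro h
      have := edge_mem_of_mem_darts_map (Finset.mem_filter.1 h).2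
      rw [ht₀, hh₀, Sym2.eq_swap] at this
      exact hch₁ this
    have hc₂ : cycBinom k tail head
        (q₁.append (SimpleGraph.Walk.cons hadj.symm SimpleGraph.Walk.nil)) =
        MvPolynomial.X e₀ * P₁ - M₁ := by
      have hFc : Finset.univ.filter (fun e => (tail e, head e) ∈
          (q₁.append (SimpleGraph.Walk.cons hadj.symm SimpleGraph.Walk.nil)).darts.map
            SimpleGraph.Dart.toProd) =
          insert e₀ (Finset.univ.filter
            (fun e => (tail e, head e) ∈ q₁.darts.map SimpleGraph.Dart.toProd)) := by
        ext e
        simp [hd₂, hiff₂ e, or_comm]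
      have hMc : Finset.univ.filter (fun e => (head e, tail e) ∈
          (q₁.append (SimpleGraph.Walk.cons hadj.symm SimpleGraph.Walk.nil)).darts.map
            SimpleGraph.Dart.toProd) =
          Finset.univ.filter
            (fun e => (head e, tail e) ∈ q₁.darts.map SimpleGraph.Dart.toProd) := by
        ext e
        simp [hd₂, hne₂ e]
      rw [cycBinom, hFc, hMc, Finset.prod_insert he₀P₁]
    refine ⟨⟨P₁, M₂, ?_⟩, ?_⟩
    · rw [hc, hc₁, hc₂]; ring
    · rw [Ideal.mem_span_pair]
      exact ⟨P₁, M₂, by rw [hc, hc₁, hc₂]; ring⟩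

end RingGraphs
end
end
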